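/- arXiv:2509.21781 — 8 statements merged into one kernel-verified Lean document; each statement's English description precedes it below -/
import Mathlib

section
/- Let D be a nontrivial 2-(v,k,λ) design with replication number r. If λ ≥ gcd(r, 2λ)², then r² > gcd(r, 2λ)² · v. -/
open Finset

/-- `blocks` is a (simple) nontrivial 2-(v,k,λ) design on the point set `P`,
with replication number `r`. -/
structure IsTwoDesign {P : Type*} [Fintype P] [DecidableEq P]
    (blocks : Finset (Finset P)) (v k lam r : ℕ) : Prop where
  card_points : Fintype.card P = v
  block_size : ∀ B ∈ blocks, B.card = k
  lam_pos : 0 < lam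
  pair_count : ∀ x y : P, x ≠ y →
    (blocks.filter fun B => x ∈ B ∧ y ∈ B).card = lam
  repl_count : ∀ x : P, (blocks.filter fun B => x ∈ B).card = r
  k_gt : 2 < k
  k_lt : k < v - 1

/-- `G` is a group of automorphisms of the design with block set `blocks`:
every element of `G` maps blocks to blocks. -/
def IsAutGroup {P : Type*} [DecidableEq P] (G : Subgroup (Equiv.Perm P))
    (blocks : Finset (Finset P)) : Prop :=
  ∀ g ∈ G, ∀ B ∈ blocks, B.image ⇑g ∈ blocks

/-- `G` is half-flag-transitive on the design with block set `blocks`: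
`G` is transitive on blocks, and for every block `B` the setwise stabilizer
of `B` in `G` has exactly two orbits `O₁`, `O₂` on the points of `B`,
of equal size (hence each of size `k/2`). -/
def HalfFlagTransitive {P : Type*} [DecidableEq P] (G : Subgroup (Equiv.Perm P))
    (blocks : Finset (Finset P)) : Prop :=
  (∀ B₁ ∈ blocks, ∀ B₂ ∈ blocks, ∃ g ∈ G, B₁.image ⇑g = B₂) ∧
  ∀ B ∈ blocks, ∃ O₁ O₂ : Finset P,
    O₁.Nonempty ∧ O₂.Nonempty ∧ Disjoint O₁ O₂ ∧ O₁ ∪ O₂ = B ∧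
    O₁.card = O₂.card ∧
    (∀ g ∈ G, B.image ⇑g = B → O₁.image ⇑g = O₁) ∧
    (∀ g ∈ G, B.image ⇑g = B → O₂.image ⇑g = O₂) ∧
    (∀ x ∈ O₁, ∀ y ∈ O₁, ∃ g ∈ G, B.image ⇑g = B ∧ g x = y) ∧
    (∀ x ∈ O₂, ∀ y ∈ O₂, ∃ g ∈ G, B.image ⇑g = B ∧ g x = y)

/-- `C` is a partition of the point set `P` that is invariant under `G`. -/
def IsInvariantPartition {P : Type*} [Fintype P] [DecidableEq P]
    (G : Subgroup (Equiv.Perm P)) (C : Finset (Finset P)) : Prop :=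
  (∀ c ∈ C, c.Nonempty) ∧
  (∀ x : P, ∃! c : Finset P, c ∈ C ∧ x ∈ c) ∧
  (∀ g ∈ G, ∀ c ∈ C, c.image ⇑g ∈ C)

/-- A partition of `P` is trivial if all classes are singletons, or it is `{P}`. -/
def TrivialPartition {P : Type*} [Fintype P] [DecidableEq P]
    (C : Finset (Finset P)) : Prop :=
  (∀ c ∈ C, c.card = 1) ∨ C = {Finset.univ}

/-- `G` is point-primitive: it is transitive on points and the only
`G`-invariant partitions of the point set are the trivial ones. -/
def PointPrimitive {P : Type*} [Fintype P] [DecidableEq P]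
    (G : Subgroup (Equiv.Perm P)) : Prop :=
  (∀ x y : P, ∃ g ∈ G, g x = y) ∧
  ∀ C : Finset (Finset P), IsInvariantPartition G C → TrivialPartition C


section DesignAux

open Matrix

variable {P : Type*} [Fintype P] [DecidableEq P]

/-- Double counting pairs `(y, B)` with `y ≠ x` and `x, y ∈ B`. -/
lemma design_lam_eq (blocks : Finset (Finset P)) (v k lam r : ℕ)
    (hv : Fintype.card P = v)
    (hk : ∀ B ∈ blocks, B.card = k)
    (hpair : ∀ x y : P, x ≠ y → (blocks.filter fun B => x ∈ B ∧ y ∈ B).card = lam)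
    (hrepl : ∀ x : P, (blocks.filter fun B => x ∈ B).card = r)
    (x : P) : lam * (v - 1) = r * (k - 1) := by
  have h1 : ∑ y ∈ univ.erase x, (blocks.filter fun B => x ∈ B ∧ y ∈ B).card
      = lam * (v - 1) := by
    rw [Finset.sum_congr rfl fun y hy => hpair x y (Finset.ne_of_mem_erase hy).symm]
    rw [Finset.sum_const, Finset.card_erase_of_mem (Finset.mem_univ x), Finset.card_univ, hv,
      smul_eq_mul, mul_comm]
  rw [← h1]
  have h2 : ∀ y, (blocks.filter fun B => x ∈ B ∧ y ∈ B).card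
      = ∑ B ∈ blocks, if x ∈ B ∧ y ∈ B then 1 else 0 := fun y => Finset.card_filter _ _
  simp_rw [h2]
  rw [Finset.sum_comm]
  have h3 : ∀ B ∈ blocks, (∑ y ∈ univ.erase x, if x ∈ B ∧ y ∈ B then 1 else 0)
      = if x ∈ B then k - 1 else 0 := by
    intro B hB
    by_cases hxB : x ∈ B
    · simp only [hxB, true_and, if_true]
      rw [← Finset.card_filter]
      have he : (univ.erase x).filter (· ∈ B) = B.erase x := by
        ext y; simp [Finset.mem_erase, and_comm]
      rw [he, Finset.card_erase_of_mem hxB, hk B hB]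
    · simp [hxB]
  rw [Finset.sum_congr rfl h3, ← Finset.sum_filter, Finset.sum_const, hrepl x, smul_eq_mul]

/-- Double counting incidences: `v * r = b * k`. -/
lemma design_count_eq (blocks : Finset (Finset P)) (v k r : ℕ)
    (hv : Fintype.card P = v)
    (hk : ∀ B ∈ blocks, B.card = k)
    (hrepl : ∀ x : P, (blocks.filter fun B => x ∈ B).card = r) :
    v * r = blocks.card * k := by
  have h1 : ∑ x : P, (blocks.filter fun B => x ∈ B).card = v * r := by
    rw [Finset.sum_congr rfl fun x _ => hrepl x, Finset.sum_const, Finset.card_univ, hv,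
      smul_eq_mul]
  rw [← h1]
  have h2 : ∀ x : P, (blocks.filter fun B => x ∈ B).card
      = ∑ B ∈ blocks, if x ∈ B then 1 else 0 := fun x => Finset.card_filter _ _
  simp_rw [h2]
  rw [Finset.sum_comm]
  have h3 : ∀ B ∈ blocks, (∑ x : P, if x ∈ B then 1 else 0) = k := by
    intro B hB
    rw [← Finset.card_filter, Finset.filter_mem_eq_inter, Finset.univ_inter, hk B hB]
  rw [Finset.sum_congr rfl h3, Finset.sum_const, smul_eq_mul]

/-- Fisher's inequality: `v ≤ b`, via positive definiteness of `N * Nᵀ`. -/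
lemma design_fisher (blocks : Finset (Finset P)) (v lam r : ℕ)
    (hv : Fintype.card P = v)
    (hpair : ∀ x y : P, x ≠ y → (blocks.filter fun B => x ∈ B ∧ y ∈ B).card = lam)
    (hrepl : ∀ x : P, (blocks.filter fun B => x ∈ B).card = r)
    (hlr : lam < r) : v ≤ blocks.card := by
  classical
  set N : Matrix P ↥blocks ℝ := Matrix.of fun x B => if x ∈ (B : Finset P) then 1 else 0 with hN
  set M : Matrix P P ℝ := N * Nᴴ with hMdef
  have hM : ∀ x y : P, M x y = ((blocks.filter fun B => x ∈ B ∧ y ∈ B).card : ℝ) := by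
    intro x y
    have : M x y = ∑ B : ↥blocks,
        (if x ∈ (B : Finset P) then (1:ℝ) else 0) * (if y ∈ (B : Finset P) then 1 else 0) := by
      simp [hMdef, hN, Matrix.mul_apply, Matrix.conjTranspose_apply]
    rw [this, Finset.sum_coe_sort blocks
      (fun B => (if x ∈ B then (1:ℝ) else 0) * (if y ∈ B then 1 else 0)),
      Finset.card_filter]
    push_cast
    refine Finset.sum_congr rfl fun B _ => ?_
    by_cases h1 : x ∈ B <;> by_cases h2 : y ∈ B <;> simp [h1, h2]
  have hMeq : M = Matrix.diagonal (fun _ : P => (r:ℝ) - lam)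
      + Matrix.of (fun _ _ : P => (lam : ℝ)) := by
    ext x y
    by_cases hxy : x = y
    · subst hxy
      have : (blocks.filter fun B => x ∈ B ∧ x ∈ B) = blocks.filter fun B => x ∈ B := by
        simp
      rw [hM, this, hrepl]
      simp
    · rw [hM, hpair x y hxy]
      simp [Matrix.diagonal_apply_ne _ hxy]
  have hdiag : (Matrix.diagonal (fun _ : P => (r:ℝ) - lam)).PosDef := by
    rw [Matrix.posDef_diagonal_iff]
    intro i
    have : (lam : ℝ) < r := by exact_mod_cast hlr
    linarith
  have hJ : (Matrix.of (fun _ _ : P => (lam : ℝ))).PosSemidef := by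
    have := Matrix.posSemidef_conjTranspose_mul_self
      (Matrix.of fun (_ : Unit) (_ : P) => Real.sqrt lam)
    convert this using 2
    ext x y
    simp [Matrix.mul_apply, Matrix.conjTranspose_apply,
      Real.mul_self_sqrt (Nat.cast_nonneg lam)]
  have hPD : M.PosDef := hMeq ▸ hdiag.add_posSemidef hJ
  have h1 : Fintype.card P = M.rank := (Matrix.rank_of_isUnit M hPD.isUnit).symm
  have h2 : M.rank ≤ N.rank := Matrix.rank_mul_le_left N Nᴴ
  have h3 : N.rank ≤ Fintype.card ↥blocks := Matrix.rank_le_card_width N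
  rw [← hv, h1]
  exact le_trans (le_trans h2 h3) (le_of_eq (Fintype.card_coe blocks))

end DesignAux

theorem r_sq_gt_gcd_sq_mul_v
    {P : Type*} [Fintype P] [DecidableEq P]
    (blocks : Finset (Finset P)) (v k lam r : ℕ)
    (hD : IsTwoDesign blocks v k lam r)
    (hlam : Nat.gcd r (2 * lam) ^ 2 ≤ lam) :
    Nat.gcd r (2 * lam) ^ 2 * v < r ^ 2 := by
  obtain ⟨hv, hk, hlam_pos, hpair, hrepl, hk_gt, hk_lt⟩ := hD
  set d := Nat.gcd r (2 * lam) with hd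
  -- basic numeric facts
  have hvk : k + 2 ≤ v := by omega
  have hcard : 0 < Fintype.card P := by rw [hv]; omega
  obtain ⟨x⟩ := Fintype.card_pos_iff.mp hcard
  have hA : lam * (v - 1) = r * (k - 1) := design_lam_eq blocks v k lam r hv hk hpair hrepl x
  have hB : v * r = blocks.card * k := design_count_eq blocks v k r hv hk hrepl
  have hr_pos : 0 < r := by
    rcases Nat.eq_zero_or_pos r with h0 | h; swap
    · exact h
    rw [h0, zero_mul] at hA
    have : 0 < lam * (v - 1) := Nat.mul_pos hlam_pos (by omega)
    omega
  have hlr : lam < r := by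
    by_contra h
    push_neg at h
    have h1 : r * (k - 1) ≤ lam * (k - 1) := Nat.mul_le_mul_right _ h
    have h2 : lam * (k - 1) < lam * (v - 1) :=
      mul_lt_mul_of_pos_left (by omega) hlam_pos
    omega
  have hfisher : v ≤ blocks.card := design_fisher blocks v lam r hv hpair hrepl hlr
  have hkr : k ≤ r := by
    have h1 : v * k ≤ v * r := by
      rw [hB]
      exact Nat.mul_le_mul_right k hfisher
    exact Nat.le_of_mul_le_mul_left h1 (by omega)
  have hstep1 : d ^ 2 * v ≤ lam * v := Nat.mul_le_mul_right v hlam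
  have hstep2 : lam * v = r * (k - 1) + lam := by
    have hv1 : v = (v - 1) + 1 := by omega
    rw [hv1, Nat.mul_succ, hA]
  have hstep3 : r * (k - 1) + r = r * k := by
    have : r * k = r * (k - 1) + r := by
      nth_rewrite 1 [show k = (k - 1) + 1 by omega]
      rw [Nat.mul_succ]
    omega
  calc d ^ 2 * v ≤ lam * v := hstep1
    _ = r * (k - 1) + lam := hstep2
    _ < r * (k - 1) + r := by omega
    _ = r * k := hstep3
    _ ≤ r * r := Nat.mul_le_mul_left r hkr
    _ = r ^ 2 := (sq r).symm
end

section
/- Let D = (P, B) be a nontrivial 2-(v,k,λ) design with replication number r, and let G ≤ Aut(D) act half-flag-transitively on D. Then G acts transitively on the point set P, and for every point α ∈ P the stabilizer G_α has exactly two orbits on the set of blocks containing α, each orbit of size r/2. -/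
open Finset

section HFTaux
open Finset
variable {P : Type*} [Fintype P] [DecidableEq P]

lemma my_swap_count {α β : Type*} (s : Finset α) (t : Finset β) (p : α → β → Prop)
    [∀ a b, Decidable (p a b)] :
    ∑ a ∈ s, (t.filter (p a)).card = ∑ b ∈ t, (s.filter (fun a => p a b)).card := by
  simp only [Finset.card_filter]
  exact Finset.sum_comm

omit [Fintype P] in
lemma my_image_inv (g : Equiv.Perm P) (s : Finset P) :
    (s.image ⇑g).image ⇑g⁻¹ = s := by
  ext x; simp

omit [Fintype P] in
lemma my_image_mul (g h : Equiv.Perm P) (s : Finset P) :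
    s.image ⇑(g * h) = (s.image ⇑h).image ⇑g := by
  rw [Finset.image_image]; rfl

lemma count3 (blocks : Finset (Finset P)) (v k r : ℕ) (hrep : ∀ x : P, (blocks.filter fun B => x ∈ B).card = r)
    (hsize : ∀ B ∈ blocks, B.card = k) (hv : Fintype.card P = v) :
    v * r = blocks.card * k := by
  have h := my_swap_count (univ : Finset P) blocks (fun x B => x ∈ B)
  have hL : ∑ x : P, (blocks.filter fun B => x ∈ B).card = v * r := by
    rw [Finset.sum_congr rfl (fun x _ => hrep x), Finset.sum_const, smul_eq_mul,
      Finset.card_univ, hv]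
  have e : ∀ B ∈ blocks, ((univ : Finset P).filter (fun x => x ∈ B)).card = k := by
    intro B hB
    rw [Finset.filter_mem_eq_inter, Finset.univ_inter]
    exact hsize B hB
  have hR : ∑ B ∈ blocks, ((univ : Finset P).filter (fun x => x ∈ B)).card
      = blocks.card * k := by
    rw [Finset.sum_congr rfl e, Finset.sum_const, smul_eq_mul]
  rw [hL, hR] at h
  exact h

lemma count4 (blocks : Finset (Finset P)) (v k lam r : ℕ) (x0 : P)
    (hpair : ∀ x y : P, x ≠ y → (blocks.filter fun B => x ∈ B ∧ y ∈ B).card = lam)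
    (hrep : ∀ x : P, (blocks.filter fun B => x ∈ B).card = r)
    (hsize : ∀ B ∈ blocks, B.card = k) (hv : Fintype.card P = v) :
    (v - 1) * lam = r * (k - 1) := by
  classical
  have h := my_swap_count (univ.erase x0) blocks (fun y B => x0 ∈ B ∧ y ∈ B)
  rw [Finset.sum_congr rfl (fun y hy => hpair x0 y (Ne.symm (Finset.ne_of_mem_erase hy))),
    Finset.sum_const, smul_eq_mul, Finset.card_erase_of_mem (Finset.mem_univ x0),
    Finset.card_univ, hv] at h
  have e : ∀ B ∈ blocks, ((univ.erase x0).filter (fun y => x0 ∈ B ∧ y ∈ B)).card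
      = if x0 ∈ B then k - 1 else 0 := by
    intro B hB
    by_cases hx : x0 ∈ B
    · rw [if_pos hx]
      have : (univ.erase x0).filter (fun y => x0 ∈ B ∧ y ∈ B) = B.erase x0 := by
        ext y; simp [hx, and_comm]
      rw [this, Finset.card_erase_of_mem hx, hsize B hB]
    · rw [if_neg hx]
      simp [hx]
  rw [Finset.sum_congr rfl e, ← Finset.sum_filter, Finset.sum_const, smul_eq_mul,
    hrep x0] at h
  exact h
lemma aux_point_trans {blocks : Finset (Finset P)} {v k lam r : ℕ} {G : Subgroup (Equiv.Perm P)}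
    (hv : Fintype.card P = v)
    (hsize : ∀ B ∈ blocks, B.card = k)
    (hlam : 0 < lam)
    (hpair : ∀ x y : P, x ≠ y → (blocks.filter fun B => x ∈ B ∧ y ∈ B).card = lam)
    (hrep : ∀ x : P, (blocks.filter fun B => x ∈ B).card = r)
    (hkgt : 2 < k) (hklt : k < v - 1)
    (hbt : ∀ B₁ ∈ blocks, ∀ B₂ ∈ blocks, ∃ g ∈ G, B₁.image ⇑g = B₂)
    (h3 : v * r = blocks.card * k)
    (h4 : (v - 1) * lam = r * (k - 1))
    (x0 y0 : P) (hxy0 : x0 ≠ y0)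
    (B0 : Finset P) (hB0 : B0 ∈ blocks)
    (hr : 0 < r) (hb : 0 < blocks.card) (hvpos : 0 < v) :
    ∀ x y : P, ∃ g ∈ G, g x = y := by
  classical
  by_contra hcon
  push_neg at hcon
  obtain ⟨x, y, hxy⟩ := hcon
  set P₁ : Finset P := univ.filter (fun z => ∃ g ∈ G, g x = z) with hP₁
  set P₂ : Finset P := univ.filter (fun z => ∃ g ∈ G, g y = z) with hP₂
  have hx1 : x ∈ P₁ := by
    simp only [hP₁, Finset.mem_filter, Finset.mem_univ, true_and]
    exact ⟨1, G.one_mem, rfl⟩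
  have hy2 : y ∈ P₂ := by
    simp only [hP₂, Finset.mem_filter, Finset.mem_univ, true_and]
    exact ⟨1, G.one_mem, rfl⟩
  have hdisj : ∀ z, z ∈ P₁ → z ∈ P₂ → False := by
    intro z hz1 hz2
    simp only [hP₁, hP₂, Finset.mem_filter, Finset.mem_univ, true_and] at hz1 hz2
    obtain ⟨g, hg, hgz⟩ := hz1
    obtain ⟨h, hh, hhz⟩ := hz2
    exact hxy (h⁻¹ * g) (G.mul_mem (G.inv_mem hh) hg)
      (by simp [Equiv.Perm.mul_apply, hgz, ← hhz])
  -- invariance of orbits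
  have hinv : ∀ (Pi : Finset P) (w : P), Pi = univ.filter (fun z => ∃ g ∈ G, g w = z) →
      ∀ g : Equiv.Perm P, g ∈ G → Pi.image ⇑g = Pi := by
    intro Pi w hPi g hg
    ext z
    simp only [hPi, Finset.mem_image, Finset.mem_filter, Finset.mem_univ, true_and]
    constructor
    · rintro ⟨a, ⟨h, hh, rfl⟩, rfl⟩
      exact ⟨g * h, G.mul_mem hg hh, by simp [Equiv.Perm.mul_apply]⟩
    · rintro ⟨h, hh, rfl⟩
      exact ⟨g⁻¹ (h w), ⟨g⁻¹ * h, G.mul_mem (G.inv_mem hg) hh, by simp [Equiv.Perm.mul_apply]⟩,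
        by simp⟩
  have hinv1 : ∀ g : Equiv.Perm P, g ∈ G → P₁.image ⇑g = P₁ := hinv P₁ x hP₁
  have hinv2 : ∀ g : Equiv.Perm P, g ∈ G → P₂.image ⇑g = P₂ := hinv P₂ y hP₂
  -- constancy of intersection sizes
  have hconst : ∀ (Pi : Finset P), (∀ g : Equiv.Perm P, g ∈ G → Pi.image ⇑g = Pi) →
      ∀ B ∈ blocks, (B ∩ Pi).card = (B0 ∩ Pi).card := by
    intro Pi hPiinv B hB
    obtain ⟨g, hg, hgB⟩ := hbt B0 hB0 B hB
    have : B ∩ Pi = (B0 ∩ Pi).image ⇑g := by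
      rw [Finset.image_inter _ _ g.injective, hgB, hPiinv g hg]
    rw [this, Finset.card_image_of_injective _ g.injective]
  set d₁ := (B0 ∩ P₁).card with hd₁
  set d₂ := (B0 ∩ P₂).card with hd₂
  set n₁ := P₁.card with hn₁
  set n₂ := P₂.card with hn₂
  -- count 1
  have c1 : ∀ (Pi : Finset P) (di : ℕ), di = (B0 ∩ Pi).card →
      (∀ g : Equiv.Perm P, g ∈ G → Pi.image ⇑g = Pi) →
      Pi.card * r = blocks.card * di := by
    intro Pi di hdi hPiinv
    have h := my_swap_count Pi blocks (fun x B => x ∈ B)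
    have hL : ∑ x ∈ Pi, (blocks.filter fun B => x ∈ B).card = Pi.card * r := by
      rw [Finset.sum_congr rfl (fun x _ => hrep x), Finset.sum_const, smul_eq_mul]
    have e : ∀ B ∈ blocks, (Pi.filter (fun x => x ∈ B)).card = di := by
      intro B hB
      rw [Finset.filter_mem_eq_inter, Finset.inter_comm, hdi]
      exact hconst Pi hPiinv B hB
    have hR : ∑ B ∈ blocks, (Pi.filter (fun x => x ∈ B)).card = blocks.card * di := by
      rw [Finset.sum_congr rfl e, Finset.sum_const, smul_eq_mul]
    rw [hL, hR] at h
    exact h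
  have c11 : n₁ * r = blocks.card * d₁ := c1 P₁ d₁ hd₁ hinv1
  have c12 : n₂ * r = blocks.card * d₂ := c1 P₂ d₂ hd₂ hinv2
  -- count 2 (cross pairs)
  have c2 : (n₁ * n₂) * lam = blocks.card * (d₁ * d₂) := by
    have h := my_swap_count (P₁ ×ˢ P₂) blocks (fun p B => p.1 ∈ B ∧ p.2 ∈ B)
    have hL : ∑ p ∈ P₁ ×ˢ P₂, (blocks.filter fun B => p.1 ∈ B ∧ p.2 ∈ B).card
        = (n₁ * n₂) * lam := by
      have e : ∀ p ∈ P₁ ×ˢ P₂, (blocks.filter fun B => p.1 ∈ B ∧ p.2 ∈ B).card = lam := by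
        intro p hp
        rw [Finset.mem_product] at hp
        refine hpair p.1 p.2 ?_
        intro hpe
        exact hdisj p.1 hp.1 (hpe ▸ hp.2)
      rw [Finset.sum_congr rfl e, Finset.sum_const, smul_eq_mul, Finset.card_product]
    have hR : ∑ B ∈ blocks, ((P₁ ×ˢ P₂).filter fun p => p.1 ∈ B ∧ p.2 ∈ B).card
        = blocks.card * (d₁ * d₂) := by
      have e : ∀ B ∈ blocks, ((P₁ ×ˢ P₂).filter fun p => p.1 ∈ B ∧ p.2 ∈ B).card
          = d₁ * d₂ := by
        intro B hB
        rw [Finset.filter_product, Finset.card_product,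
          Finset.filter_mem_eq_inter, Finset.filter_mem_eq_inter,
          Finset.inter_comm P₁ B, Finset.inter_comm P₂ B]
        rw [hd₁, hd₂, hconst P₁ hinv1 B hB, hconst P₂ hinv2 B hB]
      rw [Finset.sum_congr rfl e, Finset.sum_const, smul_eq_mul]
    rw [hL, hR] at h
    exact h
  -- derive r * r = blocks.card * lam
  have hn1 : 0 < n₁ := Finset.card_pos.mpr ⟨x, hx1⟩
  have hn2 : 0 < n₂ := Finset.card_pos.mpr ⟨y, hy2⟩
  have key : (n₁ * n₂) * (r * r) = (n₁ * n₂) * (blocks.card * lam) := by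
    calc (n₁ * n₂) * (r * r) = (n₁ * r) * (n₂ * r) := by ring
    _ = (blocks.card * d₁) * (blocks.card * d₂) := by rw [c11, c12]
    _ = blocks.card * (blocks.card * (d₁ * d₂)) := by ring
    _ = blocks.card * ((n₁ * n₂) * lam) := by rw [← c2]
    _ = (n₁ * n₂) * (blocks.card * lam) := by ring
  have hrr : r * r = blocks.card * lam :=
    Nat.eq_of_mul_eq_mul_left (Nat.mul_pos hn1 hn2) key
  -- derive v * lam = r * k
  have hvlam : r * (v * lam) = r * (r * k) := by
    calc r * (v * lam) = v * (r * lam) := by ring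
    _ = v * r * lam := by ring
    _ = blocks.card * k * lam := by rw [h3]
    _ = (blocks.card * lam) * k := by ring
    _ = (r * r) * k := by rw [hrr]
    _ = r * (r * k) := by ring
  have hvlam' : v * lam = r * k := Nat.eq_of_mul_eq_mul_left hr hvlam
  -- derive lam = r
  have hv5 : 5 ≤ v := by omega
  have hk3 : 3 ≤ k := by omega
  have e1 : v * lam = (v - 1) * lam + lam := by
    conv_lhs => rw [show v = (v - 1) + 1 by omega]
    rw [add_mul, one_mul]
  have e2 : r * k = r * (k - 1) + r := by
    conv_lhs => rw [show k = (k - 1) + 1 by omega]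
    rw [mul_add, mul_one]
  have hlr : lam = r := by omega
  have h4' : (v - 1) * r = r * (k - 1) := hlr ▸ h4
  have h4'' : (v - 1) * r = (k - 1) * r := by rw [h4', mul_comm]
  have hveqk := Nat.eq_of_mul_eq_mul_right hr h4''
  omega

lemma aux_part2 {blocks : Finset (Finset P)} {v k lam r : ℕ} {G : Subgroup (Equiv.Perm P)}
    (hv : Fintype.card P = v)
    (hrep : ∀ x : P, (blocks.filter fun B => x ∈ B).card = r)
    (hvpos : 0 < v)
    (hAut : ∀ g ∈ G, ∀ B ∈ blocks, B.image ⇑g ∈ blocks)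
    (hbt : ∀ B₁ ∈ blocks, ∀ B₂ ∈ blocks, ∃ g ∈ G, B₁.image ⇑g = B₂)
    (hpt : ∀ x y : P, ∃ g ∈ G, g x = y)
    (B₀ : Finset P) (hB₀ : B₀ ∈ blocks)
    (O₁ O₂ : Finset P)
    (hO₁ne : O₁.Nonempty) (hO₂ne : O₂.Nonempty) (hOdisj : Disjoint O₁ O₂)
    (hOunion : O₁ ∪ O₂ = B₀) (hOcard : O₁.card = O₂.card)
    (hinv₁ : ∀ g ∈ G, B₀.image ⇑g = B₀ → O₁.image ⇑g = O₁)
    (hinv₂ : ∀ g ∈ G, B₀.image ⇑g = B₀ → O₂.image ⇑g = O₂)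
    (htr₁ : ∀ x ∈ O₁, ∀ y ∈ O₁, ∃ g ∈ G, B₀.image ⇑g = B₀ ∧ g x = y)
    (htr₂ : ∀ x ∈ O₂, ∀ y ∈ O₂, ∃ g ∈ G, B₀.image ⇑g = B₀ ∧ g x = y) :
    ∀ α : P, ∃ Q₁ Q₂ : Finset (Finset P),
      Q₁.Nonempty ∧ Q₂.Nonempty ∧ Disjoint Q₁ Q₂ ∧
      Q₁ ∪ Q₂ = blocks.filter (fun B => α ∈ B) ∧
      2 * Q₁.card = r ∧ 2 * Q₂.card = r ∧
      (∀ g ∈ G, g α = α → ∀ B ∈ Q₁, B.image ⇑g ∈ Q₁) ∧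
      (∀ g ∈ G, g α = α → ∀ B ∈ Q₂, B.image ⇑g ∈ Q₂) ∧
      (∀ B₁ ∈ Q₁, ∀ B₂ ∈ Q₁, ∃ g ∈ G, g α = α ∧ B₁.image ⇑g = B₂) ∧
      (∀ B₁ ∈ Q₂, ∀ B₂ ∈ Q₂, ∃ g ∈ G, g α = α ∧ B₁.image ⇑g = B₂) := by
  classical
  intro α
  set Q : P → Finset P → Finset (Finset P) :=
    fun a O => blocks.filter (fun B => a ∈ B ∧ ∃ g ∈ G, B.image ⇑g = B₀ ∧ g a ∈ O) with hQ
  have hO₁sub : O₁ ⊆ B₀ := hOunion ▸ Finset.subset_union_left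
  have hO₂sub : O₂ ⊆ B₀ := hOunion ▸ Finset.subset_union_right
  -- membership characterization
  have hmem : ∀ (O : Finset P), (∀ g ∈ G, B₀.image ⇑g = B₀ → O.image ⇑g = O) →
      ∀ (a : P) (B : Finset P), ∀ gB ∈ G, B.image ⇑gB = B₀ →
      ((∃ g ∈ G, B.image ⇑g = B₀ ∧ g a ∈ O) ↔ gB a ∈ O) := by
    intro O hOinv a B gB hgBG hgBB
    constructor
    · rintro ⟨g, hgG, hgB, hga⟩
      have htG : gB * g⁻¹ ∈ G := G.mul_mem hgBG (G.inv_mem hgG)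
      have hB0g : B₀.image ⇑g⁻¹ = B := by rw [← hgB, my_image_inv]
      have htB : B₀.image ⇑(gB * g⁻¹) = B₀ := by
        rw [my_image_mul, hB0g, hgBB]
      have : O.image ⇑(gB * g⁻¹) = O := hOinv _ htG htB
      rw [← this]
      refine Finset.mem_image.mpr ⟨g a, hga, ?_⟩
      simp [Equiv.Perm.mul_apply]
    · intro h
      exact ⟨gB, hgBG, hgBB, h⟩
  have hmemB : ∀ (O : Finset P), O ⊆ B₀ →
      ∀ (a : P) (B : Finset P), ∀ gB : Equiv.Perm P, B.image ⇑gB = B₀ →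
      gB a ∈ O → a ∈ B := by
    intro O hOsub a B gB hgBB h
    have : gB a ∈ B.image ⇑gB := hgBB ▸ hOsub h
    obtain ⟨b, hb, hba⟩ := Finset.mem_image.mp this
    rwa [← gB.injective hba]
  -- pushforward
  have hpush : ∀ (O : Finset P), ∀ h ∈ G, ∀ (a : P), ∀ B ∈ Q a O,
      B.image ⇑h ∈ Q (h a) O := by
    intro O h hhG a B hB
    rw [hQ, Finset.mem_filter] at hB ⊢
    obtain ⟨hBbl, haB, g, hgG, hgB, hga⟩ := hB
    refine ⟨hAut h hhG B hBbl, Finset.mem_image_of_mem _ haB,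
      g * h⁻¹, G.mul_mem hgG (G.inv_mem hhG), ?_, ?_⟩
    · rw [my_image_mul, my_image_inv, hgB]
    · simp only [Equiv.Perm.mul_apply, Equiv.Perm.coe_inv, Equiv.symm_apply_apply]
      exact hga
  -- membership of Q in terms of any witness
  have hQmem : ∀ (O : Finset P), (∀ g ∈ G, B₀.image ⇑g = B₀ → O.image ⇑g = O) → O ⊆ B₀ →
      ∀ (a : P) (B : Finset P), B ∈ blocks → ∀ gB ∈ G, B.image ⇑gB = B₀ →
      (B ∈ Q a O ↔ gB a ∈ O) := by
    intro O hOinv hOsub a B hBbl gB hgBG hgBB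
    rw [hQ, Finset.mem_filter]
    constructor
    · rintro ⟨-, -, hex⟩
      exact (hmem O hOinv a B gB hgBG hgBB).mp hex
    · intro h
      exact ⟨hBbl, hmemB O hOsub a B gB hgBB h, gB, hgBG, hgBB, h⟩
  -- nonemptiness
  have hne : ∀ (O : Finset P), O ⊆ B₀ → O.Nonempty → (Q α O).Nonempty := by
    intro O hOsub hOne
    obtain ⟨x₁, hx₁⟩ := hOne
    obtain ⟨h, hhG, hhx⟩ := hpt x₁ α
    refine ⟨B₀.image ⇑h, ?_⟩
    rw [hQ, Finset.mem_filter]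
    refine ⟨hAut h hhG B₀ hB₀, ?_, h⁻¹, G.inv_mem hhG, my_image_inv h B₀, ?_⟩
    · rw [← hhx]
      exact Finset.mem_image_of_mem _ (hOsub hx₁)
    · rw [← hhx]
      simpa using hx₁
  -- disjointness
  have hQdisj : Disjoint (Q α O₁) (Q α O₂) := by
    rw [Finset.disjoint_left]
    intro B hB1 hB2
    rw [hQ, Finset.mem_filter] at hB1 hB2
    obtain ⟨hBbl, -, g₁, hg₁G, hg₁B, hg₁a⟩ := hB1
    obtain ⟨-, -, hex2⟩ := hB2
    have : g₁ α ∈ O₂ := (hmem O₂ hinv₂ α B g₁ hg₁G hg₁B).mp hex2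
    exact Finset.disjoint_left.mp hOdisj hg₁a this
  -- union
  have hQunion : Q α O₁ ∪ Q α O₂ = blocks.filter (fun B => α ∈ B) := by
    ext B
    simp only [Finset.mem_union, hQ, Finset.mem_filter]
    constructor
    · rintro (⟨h1, h2, -⟩ | ⟨h1, h2, -⟩) <;> exact ⟨h1, h2⟩
    · rintro ⟨hBbl, haB⟩
      obtain ⟨g, hgG, hgB⟩ := hbt B hBbl B₀ hB₀
      have : g α ∈ O₁ ∪ O₂ := by
        rw [hOunion, ← hgB]
        exact Finset.mem_image_of_mem _ haB
      rcases Finset.mem_union.mp this with h | h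
      · exact Or.inl ⟨hBbl, haB, g, hgG, hgB, h⟩
      · exact Or.inr ⟨hBbl, haB, g, hgG, hgB, h⟩
  -- stabilizer invariance
  have hQstab : ∀ (O : Finset P), ∀ g ∈ G, g α = α → ∀ B ∈ Q α O, B.image ⇑g ∈ Q α O := by
    intro O g hgG hga B hB
    have := hpush O g hgG α B hB
    rwa [hga] at this
  -- transitivity
  have hQtrans : ∀ (O : Finset P),
      (∀ x ∈ O, ∀ y ∈ O, ∃ g ∈ G, B₀.image ⇑g = B₀ ∧ g x = y) →
      ∀ B₁ ∈ Q α O, ∀ B₂ ∈ Q α O, ∃ g ∈ G, g α = α ∧ B₁.image ⇑g = B₂ := by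
    intro O htr B₁ hB₁ B₂ hB₂
    rw [hQ, Finset.mem_filter] at hB₁ hB₂
    obtain ⟨hB₁bl, -, g₁, hg₁G, hg₁B, hg₁a⟩ := hB₁
    obtain ⟨hB₂bl, -, g₂, hg₂G, hg₂B, hg₂a⟩ := hB₂
    obtain ⟨t, htG, htB, hta⟩ := htr (g₁ α) hg₁a (g₂ α) hg₂a
    refine ⟨g₂⁻¹ * (t * g₁), G.mul_mem (G.inv_mem hg₂G) (G.mul_mem htG hg₁G), ?_, ?_⟩
    · simp only [Equiv.Perm.mul_apply]
      rw [hta, Equiv.Perm.coe_inv, Equiv.symm_apply_apply]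
    · rw [my_image_mul, my_image_mul, hg₁B, htB, ← hg₂B, my_image_inv]
  -- cardinality: constancy over points
  have hconstQ : ∀ (O : Finset P), ∀ (a b : P), (Q a O).card = (Q b O).card := by
    intro O a b
    obtain ⟨h, hhG, hha⟩ := hpt a b
    have him : Q b O = (Q a O).image (fun B => B.image ⇑h) := by
      apply Finset.Subset.antisymm
      · intro B' hB'
        have h1 := hpush O h⁻¹ (G.inv_mem hhG) b B' hB'
        refine Finset.mem_image.mpr ⟨B'.image ⇑h⁻¹, ?_, my_image_inv h⁻¹ B' ▸ ?_⟩
        · rwa [show h⁻¹ b = a from by rw [← hha, Equiv.Perm.coe_inv, Equiv.symm_apply_apply]] at h1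
        · rw [← my_image_mul, inv_inv, ← my_image_mul]
          simp
      · intro B' hB'
        obtain ⟨B, hB, rfl⟩ := Finset.mem_image.mp hB'
        have := hpush O h hhG a B hB
        rwa [hha] at this
    rw [him, Finset.card_image_of_injective _
      (fun s t hst => by
        have := congrArg (Finset.image ⇑h⁻¹) hst
        rwa [my_image_inv, my_image_inv] at this)]
  -- counting: v * (Q α O).card = blocks.card * O.card
  have hcount : ∀ (O : Finset P), (∀ g ∈ G, B₀.image ⇑g = B₀ → O.image ⇑g = O) → O ⊆ B₀ →
      v * (Q α O).card = blocks.card * O.card := by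
    intro O hOinv hOsub
    have h := my_swap_count (univ : Finset P) blocks
      (fun a B => a ∈ B ∧ ∃ g ∈ G, B.image ⇑g = B₀ ∧ g a ∈ O)
    have hL : ∑ a : P, (blocks.filter (fun B => a ∈ B ∧ ∃ g ∈ G, B.image ⇑g = B₀ ∧ g a ∈ O)).card
        = v * (Q α O).card := by
      have e : ∀ a : P, (blocks.filter (fun B => a ∈ B ∧ ∃ g ∈ G, B.image ⇑g = B₀ ∧ g a ∈ O)).card
          = (Q α O).card := fun a => hconstQ O a α
      rw [Finset.sum_congr rfl (fun a _ => e a), Finset.sum_const, smul_eq_mul,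
        Finset.card_univ, hv]
    have hR : ∑ B ∈ blocks,
        ((univ : Finset P).filter (fun a => a ∈ B ∧ ∃ g ∈ G, B.image ⇑g = B₀ ∧ g a ∈ O)).card
        = blocks.card * O.card := by
      have e : ∀ B ∈ blocks,
          ((univ : Finset P).filter (fun a => a ∈ B ∧ ∃ g ∈ G, B.image ⇑g = B₀ ∧ g a ∈ O)).card
          = O.card := by
        intro B hBbl
        obtain ⟨gB, hgBG, hgBB⟩ := hbt B hBbl B₀ hB₀
        have hfe : (univ : Finset P).filter (fun a => a ∈ B ∧ ∃ g ∈ G, B.image ⇑g = B₀ ∧ g a ∈ O)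
            = O.image ⇑gB⁻¹ := by
          ext a
          simp only [Finset.mem_filter, Finset.mem_univ, true_and, Finset.mem_image]
          constructor
          · rintro ⟨haB, hex⟩
            have := (hmem O hOinv a B gB hgBG hgBB).mp hex
            exact ⟨gB a, this, Equiv.symm_apply_apply gB a⟩
          · rintro ⟨y, hy, rfl⟩
            have hga : gB (gB⁻¹ y) ∈ O := by simpa using hy
            exact ⟨hmemB O hOsub _ B gB hgBB hga, gB, hgBG, hgBB, hga⟩
        rw [hfe, Finset.card_image_of_injective _ (gB⁻¹).injective]
      rw [Finset.sum_congr rfl e, Finset.sum_const, smul_eq_mul]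
    rw [hL, hR] at h
    exact h
  -- equal sizes
  have hcc : (Q α O₁).card = (Q α O₂).card := by
    have h1 := hcount O₁ hinv₁ hO₁sub
    have h2 := hcount O₂ hinv₂ hO₂sub
    rw [hOcard] at h1
    exact Nat.eq_of_mul_eq_mul_left hvpos (h1.trans h2.symm)
  have hsum : (Q α O₁).card + (Q α O₂).card = r := by
    rw [← Finset.card_union_of_disjoint hQdisj, hQunion, hrep α]
  refine ⟨Q α O₁, Q α O₂, hne O₁ hO₁sub hO₁ne, hne O₂ hO₂sub hO₂ne, hQdisj, hQunion,
    by omega, by omega, hQstab O₁, hQstab O₂, hQtrans O₁ htr₁, hQtrans O₂ htr₂⟩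

end HFTaux

theorem half_flag_transitive_point_transitive_and_two_orbits_on_blocks
    {P : Type*} [Fintype P] [DecidableEq P]
    (blocks : Finset (Finset P)) (v k lam r : ℕ)
    (hD : IsTwoDesign blocks v k lam r)
    (G : Subgroup (Equiv.Perm P))
    (hAut : IsAutGroup G blocks)
    (hHFT : HalfFlagTransitive G blocks) :
    (∀ x y : P, ∃ g ∈ G, g x = y) ∧
    ∀ α : P, ∃ Q₁ Q₂ : Finset (Finset P),
      Q₁.Nonempty ∧ Q₂.Nonempty ∧ Disjoint Q₁ Q₂ ∧
      Q₁ ∪ Q₂ = blocks.filter (fun B => α ∈ B) ∧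
      2 * Q₁.card = r ∧ 2 * Q₂.card = r ∧
      (∀ g ∈ G, g α = α → ∀ B ∈ Q₁, B.image ⇑g ∈ Q₁) ∧
      (∀ g ∈ G, g α = α → ∀ B ∈ Q₂, B.image ⇑g ∈ Q₂) ∧
      (∀ B₁ ∈ Q₁, ∀ B₂ ∈ Q₁, ∃ g ∈ G, g α = α ∧ B₁.image ⇑g = B₂) ∧
      (∀ B₁ ∈ Q₂, ∀ B₂ ∈ Q₂, ∃ g ∈ G, g α = α ∧ B₁.image ⇑g = B₂) := by
  classical
  obtain ⟨hbt, hhalves⟩ := hHFT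
  have hkgt := hD.k_gt
  have hklt := hD.k_lt
  have hvpos : 0 < v := by omega
  have h1card : 1 < Fintype.card P := by rw [hD.card_points]; omega
  obtain ⟨x0, y0, hxy0⟩ := Fintype.exists_pair_of_one_lt_card h1card
  have hfn : (blocks.filter fun B => x0 ∈ B ∧ y0 ∈ B).Nonempty :=
    Finset.card_pos.mp (by rw [hD.pair_count x0 y0 hxy0]; exact hD.lam_pos)
  obtain ⟨B0, hB0f⟩ := hfn
  rw [Finset.mem_filter] at hB0f
  obtain ⟨hB0bl, hx0B0, -⟩ := hB0f
  have hr : 0 < r := by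
    rw [← hD.repl_count x0]
    exact Finset.card_pos.mpr ⟨B0, Finset.mem_filter.mpr ⟨hB0bl, hx0B0⟩⟩
  have hb : 0 < blocks.card := Finset.card_pos.mpr ⟨B0, hB0bl⟩
  have h3 := count3 blocks v k r hD.repl_count hD.block_size hD.card_points
  have h4 := count4 blocks v k lam r x0 hD.pair_count hD.repl_count hD.block_size
    hD.card_points
  have hpt := aux_point_trans hD.card_points hD.block_size hD.lam_pos hD.pair_count
    hD.repl_count hkgt hklt hbt h3 h4 x0 y0 hxy0 B0 hB0bl hr hb hvpos
  refine ⟨hpt, ?_⟩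
  obtain ⟨O₁, O₂, hO₁ne, hO₂ne, hOdisj, hOunion, hOcard, hinv₁, hinv₂, htr₁, htr₂⟩ :=
    hhalves B0 hB0bl
  exact aux_part2 (k := k) (lam := lam) hD.card_points hD.repl_count hvpos hAut hbt hpt B0 hB0bl O₁ O₂
    hO₁ne hO₂ne hOdisj hOunion hOcard hinv₁ hinv₂ htr₁ htr₂
end

section
/- If a nontrivial 2-(v,k,λ) design with replication number r admits a half-flag-transitive automorphism group, then both k and r are even. -/
open Finset

section AuxHFT

lemma hft_count_swap {α β : Type*} (A : Finset α) (C : Finset β)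
    (p : α → β → Prop) [∀ a b, Decidable (p a b)] :
    ∑ a ∈ A, (C.filter (fun c => p a c)).card
      = ∑ c ∈ C, (A.filter (fun a => p a c)).card := by
  simp only [Finset.card_filter]
  exact Finset.sum_comm

variable {P : Type*} [DecidableEq P]

lemma hft_image_eq_self (g : Equiv.Perm P) {A : Finset P}
    (h : ∀ x ∈ A, g x ∈ A) : A.image ⇑g = A := by
  apply Finset.eq_of_subset_of_card_le
  · intro y hy
    obtain ⟨x, hx, rfl⟩ := Finset.mem_image.mp hy
    exact h x hx
  · rw [Finset.card_image_of_injective _ g.injective]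

lemma hft_invariant_subset {G : Subgroup (Equiv.Perm P)}
    {B O₁ O₂ S : Finset P}
    (hdisj : Disjoint O₁ O₂) (hunion : O₁ ∪ O₂ = B)
    (htr1 : ∀ x ∈ O₁, ∀ y ∈ O₁, ∃ g ∈ G, B.image ⇑g = B ∧ g x = y)
    (htr2 : ∀ x ∈ O₂, ∀ y ∈ O₂, ∃ g ∈ G, B.image ⇑g = B ∧ g x = y)
    (hS : S ⊆ B) (hSne : S.Nonempty) (hSnb : S ≠ B)
    (hSinv : ∀ g ∈ G, B.image ⇑g = B → S.image ⇑g = S) :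
    S = O₁ ∨ S = O₂ := by
  have key : ∀ O : Finset P,
      (∀ x ∈ O, ∀ y ∈ O, ∃ g ∈ G, B.image ⇑g = B ∧ g x = y) →
      ∀ x, x ∈ O → x ∈ S → O ⊆ S := by
    intro O htr x hxO hxS y hyO
    obtain ⟨g, hgG, hgB, hgxy⟩ := htr x hxO y hyO
    rw [← hSinv g hgG hgB]
    exact Finset.mem_image.mpr ⟨x, hxS, hgxy⟩
  obtain ⟨x, hxS⟩ := hSne
  have hxB : x ∈ O₁ ∪ O₂ := by rw [hunion]; exact hS hxS
  have hall : O₁ ⊆ S → O₂ ⊆ S → False := by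
    intro h1 h2
    exact hSnb (Finset.Subset.antisymm hS (by rw [← hunion]; exact Finset.union_subset h1 h2))
  rcases Finset.mem_union.mp hxB with hx | hx
  · left
    have h1 : O₁ ⊆ S := key O₁ htr1 x hx hxS
    refine Finset.Subset.antisymm ?_ h1
    intro z hzS
    have hzB : z ∈ O₁ ∪ O₂ := by rw [hunion]; exact hS hzS
    rcases Finset.mem_union.mp hzB with h | h
    · exact h
    · exact absurd (key O₂ htr2 z h hzS) (fun h2 => hall h1 h2)
  · right
    have h2 : O₂ ⊆ S := key O₂ htr2 x hx hxS
    refine Finset.Subset.antisymm ?_ h2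
    intro z hzS
    have hzB : z ∈ O₁ ∪ O₂ := by rw [hunion]; exact hS hzS
    rcases Finset.mem_union.mp hzB with h | h
    · exact absurd (key O₁ htr1 z h hzS) (fun h1 => hall h1 h2)
    · exact h

variable [Fintype P]

open Classical in
/-- The orbit of `x` under `G`, as a `Finset`. -/
noncomputable def orbF (G : Subgroup (Equiv.Perm P)) (x : P) : Finset P :=
  Finset.univ.filter (fun y => ∃ g ∈ G, g x = y)

lemma mem_orbF {G : Subgroup (Equiv.Perm P)} {x y : P} :
    y ∈ orbF G x ↔ ∃ g ∈ G, g x = y := by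
  simp [orbF]

lemma mem_orbF_self {G : Subgroup (Equiv.Perm P)} (x : P) : x ∈ orbF G x :=
  mem_orbF.mpr ⟨1, one_mem G, rfl⟩

lemma orbF_eq_of_mem {G : Subgroup (Equiv.Perm P)} {x y : P}
    (h : y ∈ orbF G x) : orbF G y = orbF G x := by
  obtain ⟨g, hg, rfl⟩ := mem_orbF.mp h
  ext z
  simp only [mem_orbF]
  constructor
  · rintro ⟨h', hh', rfl⟩
    exact ⟨h' * g, mul_mem hh' hg, rfl⟩
  · rintro ⟨h', hh', rfl⟩
    exact ⟨h' * g⁻¹, mul_mem hh' (inv_mem hg), by simp⟩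

lemma orbF_disjoint {G : Subgroup (Equiv.Perm P)} {x y : P}
    (h : x ∉ orbF G y) : Disjoint (orbF G x) (orbF G y) := by
  rw [Finset.disjoint_left]
  intro u hux huy
  have e : orbF G x = orbF G y := (orbF_eq_of_mem hux).symm.trans (orbF_eq_of_mem huy)
  exact h (e ▸ mem_orbF_self x)

lemma orbF_image {G : Subgroup (Equiv.Perm P)} {g : Equiv.Perm P} (hg : g ∈ G) (x : P) :
    (orbF G x).image ⇑g = orbF G x := by
  apply hft_image_eq_self
  intro y hy
  obtain ⟨h, hh, rfl⟩ := mem_orbF.mp hy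
  exact mem_orbF.mpr ⟨g * h, mul_mem hg hh, rfl⟩

open Classical in
/-- The set of points of a block `B` that lie in the `G`-image of the
marked point `w` of the base block `B₀`. -/
noncomputable def halfOrb (G : Subgroup (Equiv.Perm P)) (B₀ : Finset P) (w : P)
    (B : Finset P) : Finset P :=
  B.filter (fun p => ∃ g ∈ G, B₀.image ⇑g = B ∧ g w = p)

lemma mem_halfOrb {G : Subgroup (Equiv.Perm P)} {B₀ B : Finset P} {w p : P} :
    p ∈ halfOrb G B₀ w B ↔ p ∈ B ∧ ∃ g ∈ G, B₀.image ⇑g = B ∧ g w = p := by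
  simp [halfOrb]

lemma hft_image_image_inv (g : Equiv.Perm P) (B : Finset P) :
    (B.image ⇑g).image ⇑g⁻¹ = B := by
  ext z
  simp [Finset.mem_image]

lemma halfOrb_card_const {G : Subgroup (Equiv.Perm P)} {blocks : Finset (Finset P)}
    (hAut : IsAutGroup G blocks) (B₀ : Finset P) (w : P) {x y : P}
    {g : Equiv.Perm P} (hg : g ∈ G) (hgx : g x = y) :
    (blocks.filter fun B => y ∈ halfOrb G B₀ w B).card
      = (blocks.filter fun B => x ∈ halfOrb G B₀ w B).card := by
  have main : ∀ (u : Equiv.Perm P), u ∈ G → ∀ x' B, B ∈ blocks →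
      x' ∈ halfOrb G B₀ w B → u x' ∈ halfOrb G B₀ w (B.image ⇑u) := by
    intro u hu x' B hB hx'
    obtain ⟨hx'B, h, hh, hhB, hhw⟩ := mem_halfOrb.mp hx'
    refine mem_halfOrb.mpr ⟨Finset.mem_image.mpr ⟨x', hx'B, rfl⟩, u * h, mul_mem hu hh, ?_, ?_⟩
    · rw [Equiv.Perm.coe_mul, ← Finset.image_image, hhB]
    · rw [Equiv.Perm.coe_mul, Function.comp_apply, hhw]
  refine Finset.card_bij' (fun B _ => B.image ⇑g⁻¹) (fun B _ => B.image ⇑g) ?hi ?hj ?hli ?hri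
  case hi =>
    intro B hB
    rw [Finset.mem_filter] at hB ⊢
    refine ⟨hAut g⁻¹ (inv_mem hg) B hB.1, ?_⟩
    have := main g⁻¹ (inv_mem hg) y B hB.1 hB.2
    rwa [show g⁻¹ y = x by rw [← hgx]; exact g.symm_apply_apply x] at this
  case hj =>
    intro B hB
    rw [Finset.mem_filter] at hB ⊢
    refine ⟨hAut g hg B hB.1, ?_⟩
    have := main g hg x B hB.1 hB.2
    rwa [hgx] at this
  case hli =>
    intro B _
    simpa using hft_image_image_inv g⁻¹ B
  case hri =>
    intro B _
    exact hft_image_image_inv g B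

end AuxHFT


theorem half_flag_transitive_k_and_r_even
    {P : Type*} [Fintype P] [DecidableEq P]
    (blocks : Finset (Finset P)) (v k lam r : ℕ)
    (hD : IsTwoDesign blocks v k lam r)
    (G : Subgroup (Equiv.Perm P))
    (hAut : IsAutGroup G blocks)
    (hHFT : HalfFlagTransitive G blocks) :
    Even k ∧ Even r := by
  classical
  have hkgt := hD.k_gt
  have hklt := hD.k_lt
  have hcardP := hD.card_points
  have hPcard : 1 < Fintype.card P := by omega
  have hnt : Nontrivial P := Fintype.one_lt_card_iff_nontrivial.mp hPcard
  have point_in_block : ∀ x : P, ∃ B ∈ blocks, x ∈ B := by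
    intro x
    obtain ⟨y, hy⟩ := exists_ne x
    have h := hD.pair_count x y (Ne.symm hy)
    have hpos : 0 < (blocks.filter fun B => x ∈ B ∧ y ∈ B).card := by
      rw [h]; exact hD.lam_pos
    obtain ⟨B, hB⟩ := Finset.card_pos.mp hpos
    rw [Finset.mem_filter] at hB
    exact ⟨B, hB.1, hB.2.1⟩
  have hPne : Nonempty P := Fintype.card_pos_iff.mp (by omega)
  obtain ⟨p₀⟩ := hPne
  obtain ⟨Bp, hBp, hp₀⟩ := point_in_block p₀
  have hr_pos : 0 < r := by
    rw [← hD.repl_count p₀]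
    exact Finset.card_pos.mpr ⟨Bp, Finset.mem_filter.mpr ⟨hBp, hp₀⟩⟩
  obtain ⟨O₁, O₂, hO₁ne, hO₂ne, hdisO, huniO, hcardO, hinv1, hinv2, htr1, htr2⟩ :=
    hHFT.2 Bp hBp
  have hkB₀ : Bp.card = k := hD.block_size Bp hBp
  have hk2 : k = 2 * O₁.card := by
    rw [← hkB₀, ← huniO, Finset.card_union_of_disjoint hdisO, ← hcardO]; ring
  set B₀ := Bp with hB₀def
  have hB₀ : B₀ ∈ blocks := hBp
  set k2 := O₁.card with hk2def
  refine ⟨⟨k2, by omega⟩, ?_⟩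
  -- a nonempty proper invariant subset of a block has size k2
  have hhalf : ∀ B ∈ blocks, ∀ S : Finset P, S ⊆ B → S.Nonempty → S ≠ B →
      (∀ g ∈ G, B.image ⇑g = B → S.image ⇑g = S) → S.card = k2 := by
    intro B hB S hSsub hSne hSnb hSinv
    obtain ⟨Q₁, Q₂, hQ₁ne, hQ₂ne, hdisQ, huniQ, hcardQ, _, _, htq1, htq2⟩ := hHFT.2 B hB
    have hkB : B.card = k := hD.block_size B hB
    have hq : k = Q₁.card + Q₂.card := by
      rw [← hkB, ← huniQ, Finset.card_union_of_disjoint hdisQ]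
    rcases hft_invariant_subset hdisQ huniQ htq1 htq2 hSsub hSne hSnb hSinv with rfl | rfl
    · omega
    · omega
  have hne_of : ∀ {U V B' : Finset P}, Disjoint U V → V.Nonempty → V ⊆ B' → U ≠ B' := by
    intro U V B' hUV hV hVB hU
    obtain ⟨z, hz⟩ := hV
    have hzU : z ∈ U := by rw [hU]; exact hVB hz
    exact Finset.disjoint_right.mp hUV hz hzU
  by_cases hpt : ∀ x y : P, ∃ g ∈ G, g x = y
  · -- point-transitive case
    obtain ⟨x₁, hx₁⟩ := hO₁ne
    obtain ⟨x₂, hx₂⟩ := hO₂ne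
    have hx₁B : x₁ ∈ B₀ := by rw [← huniO]; exact Finset.mem_union_left _ hx₁
    have hx₂B : x₂ ∈ B₀ := by rw [← huniO]; exact Finset.mem_union_right _ hx₂
    have hS : ∀ w, w ∈ B₀ → ∀ B ∈ blocks, (halfOrb G B₀ w B).Nonempty ∧
        (∀ h ∈ G, B.image ⇑h = B → (halfOrb G B₀ w B).image ⇑h = halfOrb G B₀ w B) := by
      intro w hw B hB
      constructor
      · obtain ⟨g, hg, hgB⟩ := hHFT.1 B₀ hB₀ B hB
        exact ⟨g w, mem_halfOrb.mpr ⟨by rw [← hgB]; exact Finset.mem_image_of_mem _ hw,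
          g, hg, hgB, rfl⟩⟩
      · intro h hh hhB
        apply hft_image_eq_self
        intro p hp
        obtain ⟨hpB, g, hg, hgB, hgw⟩ := mem_halfOrb.mp hp
        refine mem_halfOrb.mpr ⟨by rw [← hhB]; exact Finset.mem_image_of_mem _ hpB,
          h * g, mul_mem hh hg, ?_, by rw [Equiv.Perm.coe_mul, Function.comp_apply, hgw]⟩
        rw [Equiv.Perm.coe_mul, ← Finset.image_image, hgB, hhB]
    have hdisjST : ∀ B ∈ blocks, Disjoint (halfOrb G B₀ x₁ B) (halfOrb G B₀ x₂ B) := by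
      intro B hB
      rw [Finset.disjoint_left]
      intro p hp1 hp2
      obtain ⟨_, g, hg, hgB, hgx⟩ := mem_halfOrb.mp hp1
      obtain ⟨_, h, hh, hhB, hhx⟩ := mem_halfOrb.mp hp2
      have hu : h⁻¹ * g ∈ G := mul_mem (inv_mem hh) hg
      have huB : B₀.image ⇑(h⁻¹ * g) = B₀ := by
        rw [Equiv.Perm.coe_mul, ← Finset.image_image, hgB, ← hhB, hft_image_image_inv]
      have hmem1 : (h⁻¹ * g) x₁ ∈ O₁ := by
        rw [← hinv1 (h⁻¹ * g) hu huB]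
        exact Finset.mem_image_of_mem _ hx₁
      have he : (h⁻¹ * g) x₁ = x₂ := by
        rw [Equiv.Perm.mul_apply, hgx, ← hhx]
        exact h.symm_apply_apply x₂
      rw [he] at hmem1
      exact Finset.disjoint_left.mp hdisO hmem1 hx₂
    have hScard : ∀ B ∈ blocks,
        (halfOrb G B₀ x₁ B).card = k2 ∧ (halfOrb G B₀ x₂ B).card = k2 := by
      intro B hB
      have h1 := hS x₁ hx₁B B hB
      have h2 := hS x₂ hx₂B B hB
      have hd := hdisjST B hB
      constructor
      · exact hhalf B hB _ (Finset.filter_subset _ _) h1.1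
          (hne_of hd h2.1 (Finset.filter_subset _ _)) h1.2
      · exact hhalf B hB _ (Finset.filter_subset _ _) h2.1
          (hne_of hd.symm h1.1 (Finset.filter_subset _ _)) h2.2
    have hunionST : ∀ B ∈ blocks, halfOrb G B₀ x₁ B ∪ halfOrb G B₀ x₂ B = B := by
      intro B hB
      refine Finset.eq_of_subset_of_card_le ?_ ?_
      · exact Finset.union_subset (Finset.filter_subset _ _) (Finset.filter_subset _ _)
      rw [Finset.card_union_of_disjoint (hdisjST B hB), (hScard B hB).1, (hScard B hB).2,
        hD.block_size B hB]
      omega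
    have hmn : ∀ z : P, (blocks.filter fun B => z ∈ halfOrb G B₀ x₁ B).card
        + (blocks.filter fun B => z ∈ halfOrb G B₀ x₂ B).card = r := by
      intro z
      have hdf : Disjoint (blocks.filter fun B => z ∈ halfOrb G B₀ x₁ B)
          (blocks.filter fun B => z ∈ halfOrb G B₀ x₂ B) := by
        rw [Finset.disjoint_left]
        intro B h1 h2
        rw [Finset.mem_filter] at h1 h2
        exact Finset.disjoint_left.mp (hdisjST B h1.1) h1.2 h2.2
      have hcongr : (blocks.filter fun B =>
            z ∈ halfOrb G B₀ x₁ B ∨ z ∈ halfOrb G B₀ x₂ B)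
          = blocks.filter fun B => z ∈ B := by
        apply Finset.filter_congr
        intro B hB
        have h3 : z ∈ halfOrb G B₀ x₁ B ∪ halfOrb G B₀ x₂ B ↔ z ∈ B := by
          rw [hunionST B hB]
        rw [Finset.mem_union] at h3
        exact h3
      rw [← Finset.card_union_of_disjoint hdf, ← Finset.filter_or, hcongr, hD.repl_count z]
    have hconst : ∀ w, ∀ z : P, (blocks.filter fun B => z ∈ halfOrb G B₀ w B).card
        = (blocks.filter fun B => x₁ ∈ halfOrb G B₀ w B).card := by
      intro w z
      obtain ⟨g, hg, hgz⟩ := hpt x₁ z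
      exact halfOrb_card_const hAut B₀ w hg hgz
    have hsum : ∀ w, (∀ B ∈ blocks, (halfOrb G B₀ w B).card = k2) →
        v * (blocks.filter fun B => x₁ ∈ halfOrb G B₀ w B).card = blocks.card * k2 := by
      intro w hcard
      have h0 := hft_count_swap blocks (Finset.univ : Finset P)
        (fun B z => z ∈ halfOrb G B₀ w B)
      have e1 : ∀ B ∈ blocks, ((Finset.univ : Finset P).filter
          (fun z => z ∈ halfOrb G B₀ w B)).card = k2 := by
        intro B hB
        rw [Finset.filter_mem_eq_inter, Finset.univ_inter]
        exact hcard B hB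
      calc v * (blocks.filter fun B => x₁ ∈ halfOrb G B₀ w B).card
          = ∑ _z ∈ (Finset.univ : Finset P),
            (blocks.filter fun B => x₁ ∈ halfOrb G B₀ w B).card := by
            rw [Finset.sum_const, Finset.card_univ, hcardP, smul_eq_mul]
        _ = ∑ z ∈ (Finset.univ : Finset P),
            (blocks.filter fun B => z ∈ halfOrb G B₀ w B).card :=
            Finset.sum_congr rfl (fun z _ => (hconst w z).symm)
        _ = ∑ B ∈ blocks, ((Finset.univ : Finset P).filter
            (fun z => z ∈ halfOrb G B₀ w B)).card := h0.symm
        _ = ∑ _B ∈ blocks, k2 := Finset.sum_congr rfl e1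
        _ = blocks.card * k2 := by rw [Finset.sum_const, smul_eq_mul]
    have h1 := hsum x₁ (fun B hB => (hScard B hB).1)
    have h2 := hsum x₂ (fun B hB => (hScard B hB).2)
    have heq : (blocks.filter fun B => x₁ ∈ halfOrb G B₀ x₁ B).card
        = (blocks.filter fun B => x₁ ∈ halfOrb G B₀ x₂ B).card :=
      Nat.eq_of_mul_eq_mul_left (by omega) (h1.trans h2.symm)
    have h3 := hmn x₁
    exact ⟨(blocks.filter fun B => x₁ ∈ halfOrb G B₀ x₁ B).card, by omega⟩
  · -- not point-transitive: derive a contradiction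
    exfalso
    push_neg at hpt
    obtain ⟨x, y, hxy⟩ := hpt
    have hyX : y ∉ orbF G x := fun h => by
      obtain ⟨g, hg, hgx⟩ := mem_orbF.mp h
      exact hxy g hg hgx
    have hmeet : ∀ B ∈ blocks, ∀ z : P, (orbF G z ∩ B).Nonempty := by
      intro B hB z
      obtain ⟨Bz, hBz, hzBz⟩ := point_in_block z
      obtain ⟨g, hg, hgB⟩ := hHFT.1 Bz hBz B hB
      exact ⟨g z, Finset.mem_inter.mpr ⟨mem_orbF.mpr ⟨g, hg, rfl⟩,
        by rw [← hgB]; exact Finset.mem_image_of_mem _ hzBz⟩⟩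
    have hinvIB : ∀ z : P, ∀ g ∈ G, ∀ B : Finset P, B.image ⇑g = B →
        (orbF G z ∩ B).image ⇑g = orbF G z ∩ B := by
      intro z g hg B hgB
      rw [Finset.image_inter _ _ g.injective, orbF_image hg, hgB]
    have hcover : ∀ z : P, z ∈ orbF G x ∨ z ∈ orbF G y := by
      by_contra hc
      push_neg at hc
      obtain ⟨z, hzX, hzY⟩ := hc
      have dxy : Disjoint (orbF G x) (orbF G y) := (orbF_disjoint hyX).symm
      have dzx : Disjoint (orbF G z) (orbF G x) := orbF_disjoint hzX
      have dzy : Disjoint (orbF G z) (orbF G y) := orbF_disjoint hzY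
      have piece : ∀ w w' : P, Disjoint (orbF G w) (orbF G w') →
          orbF G w ∩ B₀ = O₁ ∨ orbF G w ∩ B₀ = O₂ := by
        intro w w' hd
        refine hft_invariant_subset hdisO huniO htr1 htr2 Finset.inter_subset_right
          (hmeet B₀ hB₀ w) ?_ (fun g hg hgB => hinvIB w g hg B₀ hgB)
        exact hne_of (hd.mono Finset.inter_subset_left Finset.inter_subset_left)
          (hmeet B₀ hB₀ w') Finset.inter_subset_right
      have pigeon : ∀ {U V O : Finset P}, Disjoint U V → U = O → V = O →
          O.Nonempty → False := by
        intro U V O hUV hU hV hO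
        rw [hU, hV] at hUV
        exact hO.ne_empty (disjoint_self.mp hUV)
      have p1 := piece x y dxy
      have p2 := piece y x dxy.symm
      have p3 := piece z x dzx
      have dXY' : Disjoint (orbF G x ∩ B₀) (orbF G y ∩ B₀) :=
        dxy.mono Finset.inter_subset_left Finset.inter_subset_left
      have dZX' : Disjoint (orbF G z ∩ B₀) (orbF G x ∩ B₀) :=
        dzx.mono Finset.inter_subset_left Finset.inter_subset_left
      have dZY' : Disjoint (orbF G z ∩ B₀) (orbF G y ∩ B₀) :=
        dzy.mono Finset.inter_subset_left Finset.inter_subset_left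
      rcases p1 with h1 | h1 <;> rcases p2 with h2 | h2 <;> rcases p3 with h3 | h3 <;>
        first
          | exact pigeon dXY' h1 h2 hO₁ne
          | exact pigeon dXY' h1 h2 hO₂ne
          | exact pigeon dZX' h3 h1 hO₁ne
          | exact pigeon dZX' h3 h1 hO₂ne
          | exact pigeon dZY' h3 h2 hO₁ne
          | exact pigeon dZY' h3 h2 hO₂ne
    set X := orbF G x with hXdef
    set Y := orbF G y with hYdef
    have dXY : Disjoint X Y := (orbF_disjoint hyX).symm
    have hXBcard : ∀ B ∈ blocks, (X ∩ B).card = k2 ∧ (Y ∩ B).card = k2 := by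
      intro B hB
      have hXne := hmeet B hB x
      have hYne := hmeet B hB y
      have dq : Disjoint (X ∩ B) (Y ∩ B) :=
        dXY.mono Finset.inter_subset_left Finset.inter_subset_left
      constructor
      · exact hhalf B hB _ Finset.inter_subset_right hXne
          (hne_of dq hYne Finset.inter_subset_right)
          (fun g hg hgB => hinvIB x g hg B hgB)
      · exact hhalf B hB _ Finset.inter_subset_right hYne
          (hne_of dq.symm hXne Finset.inter_subset_right)
          (fun g hg hgB => hinvIB y g hg B hgB)
    have hsumO : ∀ (W : Finset P), (∀ B ∈ blocks, (W ∩ B).card = k2) →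
        ∀ A : Finset (Finset P), A ⊆ blocks →
        ∑ w' ∈ W, (A.filter fun B => w' ∈ B).card = A.card * k2 := by
      intro W hW A hA
      rw [← hft_count_swap A W (fun B w' => w' ∈ B)]
      calc ∑ B ∈ A, (W.filter fun w' => w' ∈ B).card
          = ∑ _B ∈ A, k2 := Finset.sum_congr rfl (fun B hB => by
            rw [Finset.filter_mem_eq_inter]; exact hW B (hA hB))
        _ = A.card * k2 := by rw [Finset.sum_const, smul_eq_mul]
    have hbX : X.card * r = blocks.card * k2 := by
      have h1 := hsumO X (fun B hB => (hXBcard B hB).1) blocks Finset.Subset.rfl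
      have h2 : ∑ w' ∈ X, (blocks.filter fun B => w' ∈ B).card = X.card * r := by
        rw [Finset.sum_congr rfl (fun w' _ => hD.repl_count w'), Finset.sum_const, smul_eq_mul]
      rwa [h2] at h1
    have hbY : Y.card * r = blocks.card * k2 := by
      have h1 := hsumO Y (fun B hB => (hXBcard B hB).2) blocks Finset.Subset.rfl
      have h2 : ∑ w' ∈ Y, (blocks.filter fun B => w' ∈ B).card = Y.card * r := by
        rw [Finset.sum_congr rfl (fun w' _ => hD.repl_count w'), Finset.sum_const, smul_eq_mul]
      rwa [h2] at h1
    have hXY : X.card = Y.card := Nat.eq_of_mul_eq_mul_right hr_pos (hbX.trans hbY.symm)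
    have hxX : x ∈ X := mem_orbF_self x
    set A := blocks.filter (fun B => x ∈ B) with hAdef
    have hAsub : A ⊆ blocks := Finset.filter_subset _ _
    have hAcard : A.card = r := hD.repl_count x
    have hterm : ∀ w' : P,
        (A.filter fun B => w' ∈ B) = blocks.filter fun B => x ∈ B ∧ w' ∈ B := by
      intro w'; rw [hAdef, Finset.filter_filter]
    have hsum2 := hsumO X (fun B hB => (hXBcard B hB).1) A hAsub
    have hsum3 := hsumO Y (fun B hB => (hXBcard B hB).2) A hAsub
    have e2 : ∑ w' ∈ X, (A.filter fun B => w' ∈ B).card = r + (X.card - 1) * lam := by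
      rw [← Finset.add_sum_erase X _ hxX]
      congr 1
      · rw [hterm x]
        have hxx : (blocks.filter fun B => x ∈ B ∧ x ∈ B) = blocks.filter fun B => x ∈ B := by
          apply Finset.filter_congr; intro B _; simp
        rw [hxx, hD.repl_count x]
      · calc ∑ w' ∈ X.erase x, (A.filter fun B => w' ∈ B).card
            = ∑ _w' ∈ X.erase x, lam := Finset.sum_congr rfl (fun w' hw' => by
              rw [hterm w']
              exact hD.pair_count x w' (Ne.symm (Finset.mem_erase.mp hw').1))
          _ = (X.card - 1) * lam := by
              rw [Finset.sum_const, smul_eq_mul, Finset.card_erase_of_mem hxX]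
    have e3 : ∑ w' ∈ Y, (A.filter fun B => w' ∈ B).card = Y.card * lam := by
      calc ∑ w' ∈ Y, (A.filter fun B => w' ∈ B).card
          = ∑ _w' ∈ Y, lam := Finset.sum_congr rfl (fun w' hw' => by
            rw [hterm w']
            exact hD.pair_count x w'
              (fun he => Finset.disjoint_left.mp dXY hxX (by rw [he]; exact hw')))
        _ = Y.card * lam := by rw [Finset.sum_const, smul_eq_mul]
    have q2 : A.card * k2 = r + (X.card - 1) * lam := hsum2.symm.trans e2
    have q3 : A.card * k2 = Y.card * lam := hsum3.symm.trans e3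
    rw [hAcard] at q2 q3
    rw [← hXY] at q3
    have hr_lam : r = lam := by
      obtain ⟨c, hc⟩ : ∃ c, X.card = c + 1 :=
        ⟨X.card - 1, by have := Finset.card_pos.mpr ⟨x, hxX⟩; omega⟩
      rw [hc] at q2 q3
      simp only [Nat.add_sub_cancel] at q2
      rw [add_mul, one_mul] at q3
      have hq : r + c * lam = c * lam + lam := q2.symm.trans q3
      rw [add_comm (c * lam) lam] at hq
      exact Nat.add_right_cancel hq
    have e4 : ∀ B ∈ A, ((Finset.univ.erase x).filter fun z => z ∈ B).card = k - 1 := by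
      intro B hB
      rw [hAdef, Finset.mem_filter] at hB
      have hBe : (Finset.univ.erase x).filter (fun z => z ∈ B) = B.erase x := by
        ext z
        simp only [Finset.mem_filter, Finset.mem_erase, Finset.mem_univ, and_true]
      rw [hBe, Finset.card_erase_of_mem hB.2, hD.block_size B hB.1]
    have h4 := hft_count_swap A (Finset.univ.erase x) (fun B z => z ∈ B)
    have l4 : ∑ B ∈ A, ((Finset.univ.erase x).filter fun z => z ∈ B).card = r * (k - 1) := by
      rw [Finset.sum_congr rfl e4, Finset.sum_const, smul_eq_mul, hAcard]
    have r4 : ∑ z ∈ Finset.univ.erase x, (A.filter fun B => z ∈ B).card = (v - 1) * lam := by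
      calc ∑ z ∈ Finset.univ.erase x, (A.filter fun B => z ∈ B).card
          = ∑ _z ∈ Finset.univ.erase x, lam := Finset.sum_congr rfl (fun z hz => by
            rw [hterm z]
            exact hD.pair_count x z (Ne.symm (Finset.mem_erase.mp hz).1))
        _ = (v - 1) * lam := by
            rw [Finset.sum_const, smul_eq_mul, Finset.card_erase_of_mem (Finset.mem_univ x),
              Finset.card_univ, hcardP]
    have identity : r * (k - 1) = (v - 1) * lam := l4.symm.trans (h4.trans r4)
    rw [hr_lam, mul_comm (v - 1) lam] at identity
    have hkv : k - 1 = v - 1 := Nat.eq_of_mul_eq_mul_left hD.lam_pos identity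
    omega
end

section
/- Let D = (P, B) be a nontrivial 2-(v,k,λ) design, and let G ≤ Aut(D) be a half-flag-transitive automorphism group of D. Then G does not act regularly on P; that is, the stabilizer G_α is nontrivial for every point α ∈ P. -/
open Finset

theorem half_flag_transitive_not_regular
    {P : Type*} [Fintype P] [DecidableEq P]
    (blocks : Finset (Finset P)) (v k lam r : ℕ)
    (hD : IsTwoDesign blocks v k lam r)
    (G : Subgroup (Equiv.Perm P))
    (hAut : IsAutGroup G blocks)
    (hHFT : HalfFlagTransitive G blocks) :
    ∀ α : P, ∃ g ∈ G, g α = α ∧ g ≠ 1 := by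
  classical
  intro α
  by_contra hreg
  push_neg at hreg
  obtain ⟨hT, hO⟩ := hHFT
  have hv : Fintype.card P = v := hD.card_points
  have hk2 : 2 < k := hD.k_gt
  have hkv : k < v - 1 := hD.k_lt
  have hv5 : 5 ≤ v := by omega
  -- find a block containing α
  obtain ⟨y, hy⟩ : ∃ y : P, y ≠ α := by
    have : 1 < Fintype.card P := by omega
    exact Fintype.exists_ne_of_one_lt_card this α
  obtain ⟨B₀, hB₀'⟩ : ((blocks.filter fun B => y ∈ B ∧ α ∈ B)).Nonempty := by
    rw [← Finset.card_pos, hD.pair_count y α hy]; exact hD.lam_pos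
  rw [Finset.mem_filter] at hB₀'
  obtain ⟨hB₀, -, hαB₀⟩ := hB₀'
  obtain ⟨O₁, O₂, h1ne, h2ne, hdisj, hunion, hcard, -, -, htr1, htr2⟩ := hO B₀ hB₀
  set m := O₁.card with hm
  have hkm : k = m + m := by
    have : B₀.card = k := hD.block_size B₀ hB₀
    rw [← this, ← hunion, Finset.card_union_of_disjoint hdisj, ← hcard]
  -- the orbit containing α
  obtain ⟨O, hαO, hOcard, htr⟩ : ∃ O : Finset P, α ∈ O ∧ O.card = m ∧
      (∀ x ∈ O, ∀ y ∈ O, ∃ g ∈ G, B₀.image ⇑g = B₀ ∧ g x = y) := by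
    have : α ∈ O₁ ∪ O₂ := by rw [hunion]; exact hαB₀
    rcases Finset.mem_union.1 this with h | h
    · exact ⟨O₁, h, rfl, htr1⟩
    · exact ⟨O₂, h, hcard.symm, htr2⟩
  set Gs : Finset (Equiv.Perm P) := Finset.univ.filter (· ∈ G) with hGs
  -- upper bound : |G| ≤ v
  have hup : Gs.card ≤ v := by
    rw [← hv, ← Finset.card_univ]
    apply Finset.card_le_card_of_injOn (fun g => g α) (fun g _ => Finset.mem_univ _)
    intro g hg h hh hgh
    simp only [hGs, Finset.coe_filter, Set.mem_setOf_eq, Finset.mem_univ, true_and] at hg hh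
    have hgh' : g α = h α := hgh
    have hmem : g⁻¹ * h ∈ G := mul_mem (inv_mem hg) hh
    have hfix : (g⁻¹ * h) α = α := by
      simp only [Equiv.Perm.mul_apply]
      rw [← hgh']
      exact Equiv.symm_apply_apply g α
    have h1 : g⁻¹ * h = 1 := hreg _ hmem hfix
    rwa [inv_mul_eq_one] at h1
  -- lower bound : each fiber of g ↦ B₀.image g has at least m elements
  have hfiber : ∀ B ∈ blocks,
      m ≤ (Gs.filter (fun g : Equiv.Perm P => B₀.image ⇑g = B)).card := by
    intro B hB
    obtain ⟨g₀, hg₀G, hg₀⟩ := hT B₀ hB₀ B hB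
    rw [← hOcard]
    apply Finset.card_le_card_of_injOn
      (fun β => if hβ : β ∈ O then g₀ * Classical.choose (htr α hαO β hβ) else 1)
    · intro β hβ
      simp only [Finset.mem_coe] at hβ
      simp only [Finset.mem_coe, Finset.mem_filter, hGs, Finset.mem_univ, true_and,
        dif_pos hβ]
      obtain ⟨hG, hfix, hαβ⟩ := Classical.choose_spec (htr α hαO β hβ)
      refine ⟨mul_mem hg₀G hG, ?_⟩
      rw [Equiv.Perm.coe_mul, ← Finset.image_image, hfix, hg₀]
    · intro β hβ γ hγ heq
      simp only [Finset.mem_coe] at hβ hγ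
      simp only [dif_pos hβ, dif_pos hγ] at heq
      have hc := mul_left_cancel heq
      have h1 := (Classical.choose_spec (htr α hαO β hβ)).2.2
      have h2 := (Classical.choose_spec (htr α hαO γ hγ)).2.2
      rw [← h1, ← h2, hc]
  -- so b * m ≤ |G| ≤ v
  set b := blocks.card with hb
  have hlow : b * m ≤ Gs.card := by
    have hmaps : ∀ g ∈ Gs, B₀.image ⇑g ∈ blocks := by
      intro g hg
      rw [hGs, Finset.mem_filter] at hg
      exact hAut g hg.2 B₀ hB₀
    rw [Finset.card_eq_sum_card_fiberwise hmaps]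
    calc b * m = ∑ _B ∈ blocks, m := by rw [Finset.sum_const, smul_eq_mul]
      _ ≤ _ := Finset.sum_le_sum hfiber
  have hbmv : b * m ≤ v := le_trans hlow hup
  -- counting identity 1 : v * r = b * k
  have hvr : v * r = b * k := by
    have h1 : ∑ x : P, (blocks.filter fun B => x ∈ B).card = ∑ B ∈ blocks, B.card :=
      calc ∑ x : P, (blocks.filter fun B => x ∈ B).card
          = ∑ x : P, ∑ B ∈ blocks, if x ∈ B then 1 else 0 :=
            Finset.sum_congr rfl fun x _ => Finset.card_filter _ _
        _ = ∑ B ∈ blocks, ∑ x : P, if x ∈ B then 1 else 0 := Finset.sum_comm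
        _ = ∑ B ∈ blocks, B.card := by
            refine Finset.sum_congr rfl fun B _ => ?_
            rw [← Finset.card_filter]
            simp [Finset.filter_univ_mem]
    have hL : ∑ x : P, (blocks.filter fun B => x ∈ B).card = v * r := by
      rw [Finset.sum_const_nat fun x _ => hD.repl_count x, Finset.card_univ, hv]
    have hR : ∑ B ∈ blocks, B.card = b * k :=
      Finset.sum_const_nat fun B hB => hD.block_size B hB
    rw [← hL, h1, hR]
  -- counting identity 2 : (v - 1) * lam = r * (k - 1)
  have hlamr : (v - 1) * lam = r * (k - 1) := by
    have h1 : ∑ z ∈ Finset.univ.erase α, (blocks.filter fun B => α ∈ B ∧ z ∈ B).card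
        = ∑ B ∈ blocks.filter (fun B => α ∈ B), (B.erase α).card :=
      calc ∑ z ∈ Finset.univ.erase α, (blocks.filter fun B => α ∈ B ∧ z ∈ B).card
          = ∑ z ∈ Finset.univ.erase α, ∑ B ∈ blocks, if α ∈ B ∧ z ∈ B then 1 else 0 :=
            Finset.sum_congr rfl fun z _ => Finset.card_filter _ _
        _ = ∑ B ∈ blocks, ∑ z ∈ Finset.univ.erase α, if α ∈ B ∧ z ∈ B then 1 else 0 :=
            Finset.sum_comm
        _ = ∑ B ∈ blocks, if α ∈ B then (B.erase α).card else 0 := by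
            refine Finset.sum_congr rfl fun B _ => ?_
            by_cases hαB : α ∈ B
            · rw [if_pos hαB, ← Finset.card_filter]
              congr 1
              ext z
              simp [Finset.mem_erase, Finset.mem_filter, hαB, and_comm]
            · simp [hαB]
        _ = ∑ B ∈ blocks.filter (fun B => α ∈ B), (B.erase α).card :=
            (Finset.sum_filter _ _).symm
    have hL : ∑ z ∈ Finset.univ.erase α, (blocks.filter fun B => α ∈ B ∧ z ∈ B).card
        = (v - 1) * lam := by
      rw [Finset.sum_const_nat fun z hz =>
          hD.pair_count α z ((Finset.mem_erase.1 hz).1).symm,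
        Finset.card_erase_of_mem (Finset.mem_univ α), Finset.card_univ, hv]
    have hR : ∑ B ∈ blocks.filter (fun B => α ∈ B), (B.erase α).card = r * (k - 1) := by
      rw [Finset.sum_const_nat fun B hB => by
          rw [Finset.mem_filter] at hB
          rw [Finset.card_erase_of_mem hB.2, hD.block_size B hB.1],
        hD.repl_count α]
    rw [← hL, h1, hR]
  -- lam ≤ r
  have hlr : lam ≤ r := by
    rw [← hD.pair_count y α hy, ← hD.repl_count y]
    apply Finset.card_le_card
    intro B hB
    rw [Finset.mem_filter] at hB ⊢
    exact ⟨hB.1, hB.2.1⟩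
  have hlampos : 0 < lam := hD.lam_pos
  -- conclude : b * k ≤ 2 * v, so r ≤ 2
  have hbk : b * k ≤ 2 * v := by
    calc b * k = b * m + b * m := by rw [hkm]; ring
      _ ≤ v + v := by omega
      _ = 2 * v := by ring
  have hvr2 : v * r ≤ 2 * v := hvr ▸ hbk
  have hr2 : r ≤ 2 := by
    by_contra h
    push_neg at h
    have h3 : v * 3 ≤ v * r := Nat.mul_le_mul_left v h
    linarith
  -- abbreviate
  have hK : k - 1 < v - 1 := by omega
  interval_cases r
  · omega
  · -- r = 1
    have h1 : (v - 1) * 1 ≤ (v - 1) * lam := Nat.mul_le_mul_left _ hlampos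
    rw [hlamr] at h1
    omega
  · -- r = 2
    have hlam1 : lam = 1 := by
      by_contra h
      have h2 : 2 ≤ lam := by omega
      have h3 : (v - 1) * 2 ≤ (v - 1) * lam := Nat.mul_le_mul_left _ h2
      rw [hlamr] at h3
      omega
    rw [hlam1] at hlamr
    have hveq : v = 2 * k - 1 := by omega
    have hbk2 : b * k = 4 * k - 2 := by
      rw [← hvr]
      omega
    have hb3 : b ≤ 3 := by
      by_contra h
      push_neg at h
      have h4 : 4 * k ≤ b * k := Nat.mul_le_mul_right k h
      rw [hbk2] at h4
      omega
    interval_cases b <;> omega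
end

section
/- Let D = (P, B) be a nontrivial 2-(v,k,λ) design with replication number r, and let G ≤ Aut(D) be a half-flag-transitive automorphism group of D. Then r/gcd(r, 2λ) divides every nontrivial subdegree of G, i.e., for every point α and every orbit Γ of G_α on P with Γ ≠ {α}, r/gcd(r, 2λ) divides |Γ|. -/
open Finset

/-!
Fix `α` and a `G_α`-orbit `Γ ≠ {α}`, so that `α ∉ Γ`. Counting the pairs `(B, w)` with `α ∈ B` and
`w ∈ Γ ∩ B` gives `λ |Γ|`. The stabilizer `G_α` permutes the blocks through `α` preserving
`|Γ ∩ B|`, and each of its orbits there has size `r / 2`: the `G`-orbit of a flag `(α, B)` has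
`|G_α B|` flags on each point (`G` is point-transitive by Block's lemma) and `k / 2` flags on
each block (the points of a block form two `G_B`-orbits of size `k / 2`), so
`v |G_α B| = b k / 2 = v r / 2`. Hence `r ∣ 2 λ |Γ|`.
-/

open scoped Pointwise

theorem Finset.dvd_sum_of_dvd_card_fiber_mul {ι κ : Type*} [DecidableEq κ] {s : Finset ι}
    {f : ι → ℕ} {m : ℕ} (key : ι → κ) (hf : ∀ i ∈ s, ∀ j ∈ s, key j = key i → f j = f i)
    (hm : ∀ i ∈ s, m ∣ #{j ∈ s | key j = key i} * f i) :
    m ∣ ∑ i ∈ s, f i := by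
  rw [← sum_fiberwise_of_maps_to (fun i hi => mem_image_of_mem key hi) f]
  refine dvd_sum fun t ht => ?_
  obtain ⟨i, hi, rfl⟩ := mem_image.mp ht
  rw [sum_congr rfl fun j hj => hf i hi j (mem_filter.mp hj).1 (mem_filter.mp hj).2, sum_const,
    smul_eq_mul]
  exact hm i hi

theorem Nat.div_gcd_dvd_of_dvd_mul {r m n : ℕ} (hm : 0 < m) (h : r ∣ m * n) :
    r / r.gcd m ∣ n := by
  have hg : 0 < r.gcd m := Nat.gcd_pos_of_pos_right r hm
  refine (Nat.coprime_div_gcd_div_gcd hg).dvd_of_dvd_mul_left ?_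
  rw [← Nat.mul_div_right_comm (Nat.gcd_dvd_right r m)]
  exact Nat.div_dvd_div (Nat.gcd_dvd_left r m) h

theorem Finset.sum_card_inter_mul_card_inter {P : Type*} [DecidableEq P]
    (blocks : Finset (Finset P)) (S T : Finset P) :
    ∑ B ∈ blocks, #(S ∩ B) * #(T ∩ B) = ∑ a ∈ S, ∑ b ∈ T, #{B ∈ blocks | a ∈ B ∧ b ∈ B} := by
  rw [← sum_product' S T fun a b => #{B ∈ blocks | a ∈ B ∧ b ∈ B}]
  refine (sum_congr rfl fun B _ => ?_).trans
    (sum_card_bipartiteAbove_eq_sum_card_bipartiteBelow fun (p : P × P) B => p.1 ∈ B ∧ p.2 ∈ B).symm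
  rw [bipartiteBelow, filter_product (· ∈ B) (· ∈ B), card_product, filter_mem_eq_inter,
    filter_mem_eq_inter]

theorem Finset.card_inter_smul_of_smul_eq {H β : Type*} [Group H] [MulAction H β] [DecidableEq β]
    {S : Finset β} {g : H} (hS : g • S = S) (B : Finset β) : #(S ∩ g • B) = #(S ∩ B) := by
  conv_lhs => rw [← hS]
  rw [← smul_finset_inter, card_smul_finset]

namespace IsTwoDesign

variable {P : Type*} [Fintype P] [DecidableEq P] {blocks : Finset (Finset P)} {v k lam r : ℕ}

theorem sum_card_inter (hD : IsTwoDesign blocks v k lam r) (S : Finset P) :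
    ∑ B ∈ blocks, #(S ∩ B) = #S * r := by
  simp_rw [← filter_mem_eq_inter]
  rw [← sum_const_nat fun a _ => hD.repl_count a]
  exact (sum_card_bipartiteAbove_eq_sum_card_bipartiteBelow _).symm

theorem card_mul_repl (hD : IsTwoDesign blocks v k lam r) : v * r = #blocks * k := by
  rw [← hD.card_points, ← card_univ, ← hD.sum_card_inter,
    sum_congr rfl fun B hB => by rw [univ_inter, hD.block_size B hB], sum_const, smul_eq_mul]

theorem sum_card_inter_mul_card_inter_of_disjoint (hD : IsTwoDesign blocks v k lam r)
    {S T : Finset P} (hST : Disjoint S T) :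
    ∑ B ∈ blocks, #(S ∩ B) * #(T ∩ B) = lam * (#S * #T) := by
  rw [sum_card_inter_mul_card_inter, sum_congr rfl fun a ha => sum_congr rfl fun b hb =>
    hD.pair_count a b (disjoint_left.mp hST ha <| · ▸ hb)]
  simp only [sum_const, smul_eq_mul]
  ring

-- `∑ |S ∩ B|² = |S| ((|S| - 1) λ + r)`, with the truncated subtraction moved across.
theorem sum_card_inter_mul_self (hD : IsTwoDesign blocks v k lam r) (S : Finset P) :
    ∑ B ∈ blocks, #(S ∩ B) * #(S ∩ B) + lam * #S = #S * (#S * lam + r) := by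
  have hrow : ∀ a ∈ S, ∑ b ∈ S, #{B ∈ blocks | a ∈ B ∧ b ∈ B} + lam = #S * lam + r := by
    intro a ha
    rw [← sum_erase_add S _ ha, sum_congr rfl fun b hb =>
      hD.pair_count a b (ne_of_mem_erase hb).symm, sum_const, smul_eq_mul]
    simp only [and_self, hD.repl_count]
    rw [← card_erase_add_one ha]
    ring
  rw [sum_card_inter_mul_card_inter, mul_comm lam, ← sum_const_nat hrow, sum_add_distrib,
    sum_const, smul_eq_mul]

theorem sum_card_inter_of_notMem (hD : IsTwoDesign blocks v k lam r) {x : P} {T : Finset P}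
    (hx : x ∉ T) : ∑ B ∈ blocks with x ∈ B, #(T ∩ B) = lam * #T := by
  rw [← one_mul #T, ← card_singleton x,
    ← hD.sum_card_inter_mul_card_inter_of_disjoint (disjoint_singleton_left.mpr hx), sum_filter]
  refine sum_congr rfl fun B _ => ?_
  split_ifs with hxB
  · rw [singleton_inter_of_mem hxB, card_singleton, one_mul]
  · rw [singleton_inter_of_notMem hxB, card_empty, zero_mul]

theorem pred_mul_lam (hD : IsTwoDesign blocks v k lam r) : (v - 1) * lam = r * (k - 1) := by
  obtain ⟨x⟩ : Nonempty P :=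
    Fintype.card_pos_iff.mp (by rw [hD.card_points]; have := hD.k_lt; omega)
  have h := hD.sum_card_inter_of_notMem (notMem_erase x univ)
  rw [sum_congr rfl fun B hB => by rw [erase_inter, univ_inter, card_erase_of_mem
      (mem_filter.mp hB).2, hD.block_size B (mem_filter.mp hB).1],
    sum_const, smul_eq_mul, hD.repl_count, card_erase_of_mem (mem_univ x), card_univ,
    hD.card_points] at h
  rw [mul_comm, ← h]

end IsTwoDesign

-- `b` blocks, each meeting a set of `s` points in `c` points and its complement, of `t` points,
-- in `c'` points.
theorem lam_eq_repl_of_intersection_counts {s t b c c' lam r : ℕ} (hs : 0 < s) (ht : 0 < t)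
    (hb : 0 < b) (h₁ : s * r = b * c) (h₁' : t * r = b * c') (h₂ : lam * (s * t) = b * (c * c'))
    (h₃ : b * (c * c) + lam * s = s * (s * lam + r)) : lam = r := by
  have hlb : lam * b = r * r := by
    refine Nat.eq_of_mul_eq_mul_right (Nat.mul_pos hs ht) ?_
    calc lam * b * (s * t) = b * (lam * (s * t)) := by ring
      _ = (b * c) * (b * c') := by rw [h₂]; ring
      _ = r * r * (s * t) := by rw [← h₁, ← h₁']; ring
  refine Nat.eq_of_mul_eq_mul_right (Nat.mul_pos hs hb) ?_
  zify at *
  linear_combination b * h₃ + (s * r + b * c) * h₁ + s * s * hlb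

section BlockTransitive

variable {P : Type*} [DecidableEq P]

def BlockTransitive (G : Subgroup (Equiv.Perm P)) (blocks : Finset (Finset P)) : Prop :=
  ∀ B₁ ∈ blocks, ∀ B₂ ∈ blocks, ∃ g ∈ G, B₁.image ⇑g = B₂

theorem BlockTransitive.card_inter_eq {G : Subgroup (Equiv.Perm P)} {blocks : Finset (Finset P)}
    (hG : BlockTransitive G blocks) {S : Finset P} (hS : ∀ g ∈ G, g • S = S) {B₁ B₂ : Finset P}
    (hB₁ : B₁ ∈ blocks) (hB₂ : B₂ ∈ blocks) : #(S ∩ B₁) = #(S ∩ B₂) := by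
  obtain ⟨g, hg, rfl⟩ := hG B₁ hB₁ B₂ hB₂
  exact (card_inter_smul_of_smul_eq (hS g hg) B₁).symm

end BlockTransitive

namespace IsTwoDesign

variable {P : Type*} [Fintype P] [DecidableEq P] {blocks : Finset (Finset P)} {v k lam r : ℕ}
  {G : Subgroup (Equiv.Perm P)}

/-- Block's lemma. -/
theorem eq_univ_of_smul_eq (hD : IsTwoDesign blocks v k lam r) (hG : BlockTransitive G blocks)
    {S : Finset P} (hS : S.Nonempty) (hinv : ∀ g ∈ G, g • S = S) : S = univ := by
  by_contra hSu
  obtain ⟨x, hx⟩ := hS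
  obtain ⟨y, hy⟩ : Sᶜ.Nonempty := by rwa [nonempty_iff_ne_empty, Ne, compl_eq_empty_iff]
  have hinvc : ∀ g ∈ G, g • Sᶜ = Sᶜ := fun g hg => by
    rw [compl_eq_univ_sdiff, smul_finset_sdiff, smul_finset_univ, hinv g hg]
  obtain ⟨B₀, hB₀⟩ : blocks.Nonempty := by
    have hxy : x ≠ y := fun h => (mem_compl.mp hy) (h ▸ hx)
    have := hD.pair_count x y hxy ▸ hD.lam_pos
    exact (card_pos.mp this).mono (filter_subset _ _)
  have hconst {T : Finset P} (hT : ∀ g ∈ G, g • T = T) (B : Finset P) (hB : B ∈ blocks) :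
      #(T ∩ B) = #(T ∩ B₀) := hG.card_inter_eq hT hB hB₀
  have h₁ : #S * r = #blocks * #(S ∩ B₀) := by
    rw [← hD.sum_card_inter, sum_congr rfl (hconst hinv), sum_const, smul_eq_mul]
  have h₁' : #Sᶜ * r = #blocks * #(Sᶜ ∩ B₀) := by
    rw [← hD.sum_card_inter, sum_congr rfl (hconst hinvc), sum_const, smul_eq_mul]
  have h₂ : lam * (#S * #Sᶜ) = #blocks * (#(S ∩ B₀) * #(Sᶜ ∩ B₀)) := by
    rw [← hD.sum_card_inter_mul_card_inter_of_disjoint disjoint_compl_right,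
      sum_congr rfl fun B hB => by rw [hconst hinv B hB, hconst hinvc B hB], sum_const, smul_eq_mul]
  have h₃ : #blocks * (#(S ∩ B₀) * #(S ∩ B₀)) + lam * #S = #S * (#S * lam + r) := by
    rw [← hD.sum_card_inter_mul_self, sum_congr rfl fun B hB => by rw [hconst hinv B hB],
      sum_const, smul_eq_mul]
  have hlr : lam = r := lam_eq_repl_of_intersection_counts (card_pos.mpr ⟨x, hx⟩)
    (card_pos.mpr ⟨y, hy⟩) (card_pos.mpr ⟨B₀, hB₀⟩) h₁ h₁' h₂ h₃
  have hvk : v - 1 = k - 1 := by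
    refine Nat.eq_of_mul_eq_mul_right hD.lam_pos ?_
    rw [hD.pred_mul_lam, hlr, mul_comm]
  have := hD.k_lt
  omega

theorem exists_apply_eq (hD : IsTwoDesign blocks v k lam r) (hG : BlockTransitive G blocks)
    (x y : P) : ∃ g ∈ G, g x = y := by
  classical
  set S : Finset P := {a | ∃ g ∈ G, g x = a}
  have hsub : ∀ g ∈ G, g • S ⊆ S := fun g hg a ha => by
    obtain ⟨b, hb, rfl⟩ := mem_smul_finset.mp ha
    obtain ⟨h, hh, rfl⟩ := (mem_filter.mp hb).2
    exact mem_filter.mpr ⟨mem_univ _, g * h, mul_mem hg hh, rfl⟩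
  have hS : S = univ :=
    hD.eq_univ_of_smul_eq hG ⟨x, mem_filter.mpr ⟨mem_univ x, 1, one_mem G, rfl⟩⟩ fun g hg =>
      eq_of_subset_of_card_le (hsub g hg) (card_smul_finset g S).ge
  exact (mem_filter.mp (hS ▸ mem_univ y : y ∈ S)).2

end IsTwoDesign

namespace HalfFlagTransitive

variable {P : Type*} [Fintype P] [DecidableEq P] {blocks : Finset (Finset P)} {v k lam r : ℕ}
  {G : Subgroup (Equiv.Perm P)}

open scoped Classical in
theorem two_mul_card_orbit_in_block (hHFT : HalfFlagTransitive G blocks)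
    (hD : IsTwoDesign blocks v k lam r) {B : Finset P} (hB : B ∈ blocks) {x : P} (hx : x ∈ B) :
    2 * #{y | ∃ g ∈ G, g • B = B ∧ g x = y} = k := by
  obtain ⟨O₁, O₂, -, -, hdisj, hunion, hcard, hinv₁, hinv₂, htr₁, htr₂⟩ := hHFT.2 B hB
  have horbit (O : Finset P) (hinv : ∀ g ∈ G, B.image ⇑g = B → O.image ⇑g = O)
      (htr : ∀ x ∈ O, ∀ y ∈ O, ∃ g ∈ G, B.image ⇑g = B ∧ g x = y) (hxO : x ∈ O) :
      ({y | ∃ g ∈ G, g • B = B ∧ g x = y} : Finset P) = O := by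
    ext y
    simp only [mem_filter, mem_univ, true_and]
    constructor
    · rintro ⟨g, hg, hgB, rfl⟩
      exact hinv g hg hgB ▸ mem_image_of_mem g hxO
    · exact htr x hxO y
  have hk : #O₁ + #O₂ = k := by rw [← card_union_of_disjoint hdisj, hunion, hD.block_size B hB]
  rcases mem_union.mp (hunion ▸ hx) with hx | hx
  · rw [horbit O₁ hinv₁ htr₁ hx]; omega
  · rw [horbit O₂ hinv₂ htr₂ hx]; omega

open scoped Classical in
theorem two_mul_card_stabilizer_orbit_block (hHFT : HalfFlagTransitive G blocks)
    (hD : IsTwoDesign blocks v k lam r) (hAut : IsAutGroup G blocks) {α : P} {B₁ : Finset P}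
    (hB₁ : B₁ ∈ blocks) (hα : α ∈ B₁) :
    2 * #{B ∈ blocks | ∃ g ∈ G, g α = α ∧ g • B₁ = B} = r := by
  -- `F` is the `G`-orbit of the flag `(α, B₁)`; its rows have size `m` and its columns `k / 2`.
  let F : P → Finset P → Prop := fun x B => ∃ g ∈ G, g α = x ∧ g • B₁ = B
  set m := #{B ∈ blocks | F α B}
  have hcol : ∀ B ∈ blocks, 2 * #{x | F x B} = k := by
    intro B hB
    obtain ⟨g₀, hg₀, hg₀B : g₀ • B₁ = B⟩ := hHFT.1 B₁ hB₁ B hB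
    rw [← hHFT.two_mul_card_orbit_in_block hD hB (hg₀B ▸ smul_mem_smul_finset hα)]
    congr 2
    ext y
    simp only [mem_filter, mem_univ, true_and, F]
    constructor
    · rintro ⟨g, hg, rfl, hgB⟩
      refine ⟨g * g₀⁻¹, mul_mem hg (inv_mem hg₀), ?_, by simp⟩
      rw [mul_smul, inv_smul_eq_iff.mpr hg₀B.symm, hgB]
    · rintro ⟨h, hh, hhB, rfl⟩
      exact ⟨h * g₀, mul_mem hh hg₀, rfl, by rw [mul_smul, hg₀B, hhB]⟩
  have hrow_le (x y : P) : #{B ∈ blocks | F x B} ≤ #{B ∈ blocks | F y B} := by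
    obtain ⟨h, hh, rfl⟩ := hD.exists_apply_eq hHFT.1 x y
    refine card_le_card_of_injOn (h • ·) (fun B hB => ?_) (MulAction.injective h).injOn
    obtain ⟨hBbl, g, hg, rfl, rfl⟩ := mem_filter.mp hB
    exact mem_filter.mpr ⟨hAut h hh _ hBbl, h * g, mul_mem hh hg, rfl, mul_smul h g B₁⟩
  have hcount := card_mul_eq_card_mul F (s := univ) (t := blocks) (m := m) (n := k / 2)
    (fun x _ => (hrow_le x α).antisymm (hrow_le α x))
    (fun B hB => by have := hcol B hB; simp only [bipartiteBelow]; omega)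
  have hk : 2 * (k / 2) = k := by have := hcol B₁ hB₁; omega
  have hv : 0 < v := hD.card_points ▸ card_pos.mpr ⟨α, mem_univ α⟩
  refine Nat.eq_of_mul_eq_mul_left hv ?_
  rw [card_univ, hD.card_points] at hcount
  rw [hD.card_mul_repl, ← hk, mul_left_comm, hcount]
  ring

theorem repl_dvd_sum (hHFT : HalfFlagTransitive G blocks) (hD : IsTwoDesign blocks v k lam r)
    (hAut : IsAutGroup G blocks) (α : P) {f : Finset P → ℕ}
    (hf : ∀ g ∈ G, g α = α → ∀ B, f (g • B) = f B) :
    r ∣ ∑ B ∈ blocks with α ∈ B, 2 * f B := by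
  classical
  let Gα : Subgroup (Equiv.Perm P) := G ⊓ MulAction.stabilizer (Equiv.Perm P) α
  have hmem {B B' : Finset P} :
      B' ∈ MulAction.orbit Gα B ↔ ∃ g ∈ G, g α = α ∧ g • B = B' := by
    simp only [MulAction.mem_orbit_iff, Subtype.exists, Subgroup.mk_smul, exists_prop, Gα,
      Subgroup.mem_inf, MulAction.mem_stabilizer_iff, Equiv.Perm.smul_def, and_assoc]
  refine dvd_sum_of_dvd_card_fiber_mul (fun B => MulAction.orbit Gα B) (fun B _ B' _ h => ?_)
    fun B hB => ?_
  · obtain ⟨g, hg, hgα, rfl⟩ := hmem.mp (MulAction.orbit_eq_iff.mp h.symm)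
    rw [hf g hg hgα]
  · obtain ⟨hBbl, hαB⟩ := mem_filter.mp hB
    have hfiber : ({B' ∈ {B ∈ blocks | α ∈ B} | MulAction.orbit Gα B' = MulAction.orbit Gα B}
        : Finset (Finset P)) = {B' ∈ blocks | ∃ g ∈ G, g α = α ∧ g • B = B'} := by
      ext B'
      simp only [mem_filter, MulAction.orbit_eq_iff, hmem, and_assoc]
      refine and_congr_right fun _ => ⟨fun h => h.2, fun h => ⟨?_, h⟩⟩
      obtain ⟨g, -, hgα, rfl⟩ := h
      exact hgα ▸ smul_mem_smul_finset hαB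
    rw [hfiber, ← mul_assoc, mul_comm _ 2,
      hHFT.two_mul_card_stabilizer_orbit_block hD hAut hBbl hαB]
    exact dvd_mul_right r _

end HalfFlagTransitive

theorem half_flag_transitive_subdegree_divisibility_general
    {P : Type*} [Fintype P] [DecidableEq P]
    (blocks : Finset (Finset P)) (v k lam r : ℕ)
    (hD : IsTwoDesign blocks v k lam r)
    (G : Subgroup (Equiv.Perm P))
    (hAut : IsAutGroup G blocks)
    (hHFT : HalfFlagTransitive G blocks)
    (α : P) (Γ : Finset P)
    (hclosed : ∀ g ∈ G, g α = α → Γ.image ⇑g = Γ)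
    (htrans : ∀ x ∈ Γ, ∀ y ∈ Γ, ∃ g ∈ G, g α = α ∧ g x = y)
    (hnontriv : Γ ≠ {α}) :
    r / Nat.gcd r (2 * lam) ∣ Γ.card := by
  have hαΓ : α ∉ Γ := fun hα => hnontriv <| eq_singleton_iff_unique_mem.mpr ⟨hα, fun x hx => by
    obtain ⟨g, -, hgα, rfl⟩ := htrans α hα x hx
    exact hgα⟩
  have hdvd := hHFT.repl_dvd_sum hD hAut α (f := fun B => #(Γ ∩ B))
    fun g hg hgα B => card_inter_smul_of_smul_eq (hclosed g hg hgα) B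
  rw [← mul_sum, hD.sum_card_inter_of_notMem hαΓ, ← mul_assoc] at hdvd
  exact Nat.div_gcd_dvd_of_dvd_mul (Nat.mul_pos two_pos hD.lam_pos) hdvd

theorem half_flag_transitive_subdegree_divisibility
    {P : Type*} [Fintype P] [DecidableEq P]
    (blocks : Finset (Finset P)) (v k lam r : ℕ)
    (hD : IsTwoDesign blocks v k lam r)
    (G : Subgroup (Equiv.Perm P))
    (hAut : IsAutGroup G blocks)
    (hHFT : HalfFlagTransitive G blocks)
    (α : P) (Γ : Finset P)
    (hne : Γ.Nonempty)
    (hclosed : ∀ g ∈ G, g α = α → Γ.image ⇑g = Γ)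
    (htrans : ∀ x ∈ Γ, ∀ y ∈ Γ, ∃ g ∈ G, g α = α ∧ g x = y)
    (hnontriv : Γ ≠ {α}) :
    r / Nat.gcd r (2 * lam) ∣ Γ.card :=
  half_flag_transitive_subdegree_divisibility_general blocks v k lam r hD G hAut hHFT α Γ hclosed
    htrans hnontriv
end

section
/- Let D = (P, B) be a nontrivial 2-(v,k,λ) design with replication number r, let G ≤ Aut(D) be half-flag-transitive, let α ∈ P, and let P_1, P_2 be the two orbits (each of size r/2) of G_α on the set of blocks containing α. Let Γ be a nontrivial orbit of G_α on P. Then the intersection size |Γ ∩ B| takes a constant value μ_1 for all blocks B ∈ P_1 and a constant value μ_2 for all blocks B ∈ P_2, and (r/2)(μ_1 + μ_2) = λ|Γ|. -/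
open Finset

theorem half_flag_transitive_intersection_counting
    {P : Type*} [Fintype P] [DecidableEq P]
    (blocks : Finset (Finset P)) (v k lam r : ℕ)
    (hD : IsTwoDesign blocks v k lam r)
    (G : Subgroup (Equiv.Perm P))
    (hAut : IsAutGroup G blocks)
    (hHFT : HalfFlagTransitive G blocks)
    (α : P) (Q₁ Q₂ : Finset (Finset P))
    -- `Q₁`, `Q₂` are the two orbits (each of size `r/2`) of `G_α` on the blocks through `α`:
    (hQ₁ne : Q₁.Nonempty) (hQ₂ne : Q₂.Nonempty) (hdisj : Disjoint Q₁ Q₂)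
    (hunion : Q₁ ∪ Q₂ = blocks.filter (fun B => α ∈ B))
    (hQ₁card : 2 * Q₁.card = r) (hQ₂card : 2 * Q₂.card = r)
    (hQ₁closed : ∀ g ∈ G, g α = α → ∀ B ∈ Q₁, B.image ⇑g ∈ Q₁)
    (hQ₂closed : ∀ g ∈ G, g α = α → ∀ B ∈ Q₂, B.image ⇑g ∈ Q₂)
    (hQ₁trans : ∀ B₁ ∈ Q₁, ∀ B₂ ∈ Q₁, ∃ g ∈ G, g α = α ∧ B₁.image ⇑g = B₂)
    (hQ₂trans : ∀ B₁ ∈ Q₂, ∀ B₂ ∈ Q₂, ∃ g ∈ G, g α = α ∧ B₁.image ⇑g = B₂)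
    -- `Γ` is a nontrivial orbit of `G_α` on the point set:
    (Γ : Finset P) (hΓne : Γ.Nonempty)
    (hΓclosed : ∀ g ∈ G, g α = α → Γ.image ⇑g = Γ)
    (hΓtrans : ∀ x ∈ Γ, ∀ y ∈ Γ, ∃ g ∈ G, g α = α ∧ g x = y)
    (hΓnontriv : Γ ≠ {α}) :
    ∃ μ₁ μ₂ : ℕ,
      (∀ B ∈ Q₁, (Γ ∩ B).card = μ₁) ∧
      (∀ B ∈ Q₂, (Γ ∩ B).card = μ₂) ∧
      r * (μ₁ + μ₂) = 2 * (lam * Γ.card) := by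
  classical
  obtain ⟨B₁₀, hB₁₀⟩ := hQ₁ne
  obtain ⟨B₂₀, hB₂₀⟩ := hQ₂ne
  -- constancy of intersection size on each orbit
  have hconst : ∀ Q : Finset (Finset P),
      (∀ B₁ ∈ Q, ∀ B₂ ∈ Q, ∃ g ∈ G, g α = α ∧ B₁.image ⇑g = B₂) →
      ∀ B₀ ∈ Q, ∀ B ∈ Q, (Γ ∩ B).card = (Γ ∩ B₀).card := by
    intro Q htrans B₀ hB₀ B hB
    obtain ⟨g, hg, hgα, hgB⟩ := htrans B₀ hB₀ B hB
    have hΓg := hΓclosed g hg hgα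
    conv_lhs => rw [← hgB, ← hΓg]
    rw [← Finset.image_inter _ _ g.injective,
      Finset.card_image_of_injective _ g.injective]
  have hαΓ : α ∉ Γ := by
    intro hα
    apply hΓnontriv
    apply Finset.eq_singleton_iff_unique_mem.mpr
    refine ⟨hα, fun y hy => ?_⟩
    obtain ⟨g, hg, hgα, hgy⟩ := hΓtrans α hα y hy
    rw [← hgy, hgα]
  set S := blocks.filter (fun B => α ∈ B) with hS
  -- double counting
  have hsum : ∑ B ∈ S, (Γ ∩ B).card = lam * Γ.card := by
    calc ∑ B ∈ S, (Γ ∩ B).card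
        = ∑ B ∈ S, ∑ x ∈ Γ, if x ∈ B then 1 else 0 := by
          refine Finset.sum_congr rfl fun B _ => ?_
          rw [← Finset.filter_mem_eq_inter, Finset.card_filter]
      _ = ∑ x ∈ Γ, ∑ B ∈ S, if x ∈ B then 1 else 0 := Finset.sum_comm
      _ = ∑ x ∈ Γ, (S.filter (fun B => x ∈ B)).card := by
          refine Finset.sum_congr rfl fun x _ => ?_
          rw [Finset.card_filter]
      _ = ∑ x ∈ Γ, lam := by
          refine Finset.sum_congr rfl fun x hx => ?_
          have hxα : α ≠ x := fun h => hαΓ (h ▸ hx)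
          have : S.filter (fun B => x ∈ B)
              = blocks.filter (fun B => α ∈ B ∧ x ∈ B) := by
            rw [hS, Finset.filter_filter]
          rw [this, hD.pair_count α x hxα]
      _ = lam * Γ.card := by
          rw [Finset.sum_const, smul_eq_mul, mul_comm]
  refine ⟨(Γ ∩ B₁₀).card, (Γ ∩ B₂₀).card,
    hconst Q₁ hQ₁trans B₁₀ hB₁₀, hconst Q₂ hQ₂trans B₂₀ hB₂₀, ?_⟩
  have h1 : ∑ B ∈ Q₁, (Γ ∩ B).card = Q₁.card * (Γ ∩ B₁₀).card := by
    rw [Finset.sum_congr rfl (hconst Q₁ hQ₁trans B₁₀ hB₁₀),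
      Finset.sum_const, smul_eq_mul]
  have h2 : ∑ B ∈ Q₂, (Γ ∩ B).card = Q₂.card * (Γ ∩ B₂₀).card := by
    rw [Finset.sum_congr rfl (hconst Q₂ hQ₂trans B₂₀ hB₂₀),
      Finset.sum_const, smul_eq_mul]
  have hsplit : ∑ B ∈ Q₁, (Γ ∩ B).card + ∑ B ∈ Q₂, (Γ ∩ B).card
      = lam * Γ.card := by
    rw [← Finset.sum_union hdisj, hunion]; exact hsum
  rw [h1, h2] at hsplit
  calc r * ((Γ ∩ B₁₀).card + (Γ ∩ B₂₀).card)
      = r * (Γ ∩ B₁₀).card + r * (Γ ∩ B₂₀).card := by ring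
    _ = 2 * (Q₁.card * (Γ ∩ B₁₀).card) + 2 * (Q₂.card * (Γ ∩ B₂₀).card) := by
        have e1 : r * (Γ ∩ B₁₀).card = 2 * (Q₁.card * (Γ ∩ B₁₀).card) := by
          rw [← hQ₁card]; ring
        have e2 : r * (Γ ∩ B₂₀).card = 2 * (Q₂.card * (Γ ∩ B₂₀).card) := by
          rw [← hQ₂card]; ring
        rw [e1, e2]
    _ = 2 * (lam * Γ.card) := by rw [← hsplit]; ring
end

section
/- Let D = (P, B) be a nontrivial 2-(v,k,λ) design with replication number r, and let G ≤ Aut(D) be a half-flag-transitive automorphism group of D. Then for any point α ∈ P, |G| ≤ 4·|G_α|³. -/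
open Finset

lemma sum_filter_card_comm {α β : Type*} (A : Finset α) (Bs : Finset β)
    (q : α → β → Prop) [∀ a b, Decidable (q a b)] :
    ∑ a ∈ A, (Bs.filter (q a)).card = ∑ b ∈ Bs, (A.filter (fun a => q a b)).card := by
  simp_rw [Finset.card_filter]
  exact Finset.sum_comm

lemma image_inv_eq {P : Type*} [DecidableEq P] {C B : Finset P} (w : Equiv.Perm P)
    (h : C.image ⇑w = B) : B.image ⇑w⁻¹ = C := by
  rw [← h, Finset.image_image]
  ext x
  simp

lemma inv_fix {P : Type*} {w : Equiv.Perm P} {a b : P} (h : w a = b) : w⁻¹ b = a := by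
  rw [← h]
  exact Equiv.symm_apply_apply w a

lemma fisher {P : Type*} [Fintype P] [DecidableEq P] (blocks : Finset (Finset P))
    (v k lam r : ℕ)
    (hpair : ∀ x y : P, x ≠ y → (blocks.filter fun B => x ∈ B ∧ y ∈ B).card = lam)
    (hrepl : ∀ x : P, (blocks.filter fun B => x ∈ B).card = r)
    (hv : Fintype.card P = v) (hlamr : lam < r) :
    v ≤ blocks.card := by
  classical
  have key : LinearIndependent ℝ
      (fun x : P => (fun C : {B // B ∈ blocks} => if x ∈ (C : Finset P) then (1:ℝ) else 0)) := by
    rw [Fintype.linearIndependent_iff]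
    intro g hg
    have hblock : ∀ B ∈ blocks, ∑ x ∈ B, g x = 0 := by
      intro B hB
      have h := congrFun hg ⟨B, hB⟩
      simp only [Finset.sum_apply, Pi.smul_apply, smul_eq_mul, Pi.zero_apply,
        mul_ite, mul_one, mul_zero] at h
      rwa [Finset.sum_ite_mem, Finset.univ_inter] at h
    have hy : ∀ z : P, ((r : ℝ) - lam) * g z + lam * ∑ x, g x = 0 := by
      intro z
      have h0 : ∑ C ∈ blocks.filter (fun B => z ∈ B), (∑ x ∈ C, g x) = 0 :=
        Finset.sum_eq_zero fun C hC => hblock C (Finset.mem_filter.mp hC).1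
      have h1 : ∑ C ∈ blocks.filter (fun B => z ∈ B), (∑ x ∈ C, g x)
          = ∑ x : P, ((((blocks.filter fun B => z ∈ B).filter fun B => x ∈ B).card : ℝ)) * g x := by
        rw [Finset.sum_congr rfl (g := fun C => ∑ x : P, if x ∈ C then g x else 0)
          (fun C _ => by simp [Finset.sum_ite_mem]), Finset.sum_comm]
        refine Finset.sum_congr rfl fun x _ => ?_
        rw [← Finset.sum_filter, Finset.sum_const, nsmul_eq_mul]
      have h2 : ∀ x : P, (((blocks.filter fun B => z ∈ B).filter fun B => x ∈ B).card : ℝ)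
          = if x = z then (r : ℝ) else (lam : ℝ) := by
        intro x
        rw [Finset.filter_filter]
        by_cases hxz : x = z
        · subst hxz
          rw [if_pos rfl,
            Finset.filter_congr (q := fun B => x ∈ B) (fun B _ => by tauto)]
          exact_mod_cast congrArg Nat.cast (hrepl x)
        · rw [if_neg hxz]
          exact_mod_cast congrArg Nat.cast (hpair z x (Ne.symm hxz))
      have h3 : ∑ x : P, ((((blocks.filter fun B => z ∈ B).filter fun B => x ∈ B).card : ℝ)) * g x
          = ((r : ℝ) - lam) * g z + lam * ∑ x, g x := by
        rw [Finset.sum_congr rfl fun x _ => by rw [h2 x]]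
        have : ∀ x : P, (if x = z then (r : ℝ) else (lam : ℝ)) * g x
            = (if x = z then ((r : ℝ) - lam) * g x else 0) + (lam : ℝ) * g x := by
          intro x; by_cases hxz : x = z <;> simp [hxz] <;> ring
        rw [Finset.sum_congr rfl fun x _ => this x, Finset.sum_add_distrib,
          Finset.sum_ite_eq' Finset.univ z, if_pos (Finset.mem_univ z), ← Finset.mul_sum]
      rw [h1, h3] at h0
      exact h0
    have hrl : (0:ℝ) < (r : ℝ) - lam := by
      have : (lam : ℝ) < r := by exact_mod_cast hlamr
      linarith
    have hS : ∑ x : P, g x = 0 := by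
      have hsum : ∑ z : P, (((r : ℝ) - lam) * g z + lam * ∑ x, g x) = 0 :=
        Finset.sum_eq_zero fun z _ => hy z
      rw [Finset.sum_add_distrib, ← Finset.mul_sum, Finset.sum_const, Finset.card_univ,
        nsmul_eq_mul] at hsum
      have hfac : (((r:ℝ) - lam) + (Fintype.card P : ℝ) * lam) * (∑ x : P, g x) = 0 := by
        linear_combination hsum
      rcases mul_eq_zero.mp hfac with h | h
      · nlinarith [Nat.cast_nonneg (α := ℝ) (Fintype.card P), Nat.cast_nonneg (α := ℝ) lam]
      · exact h
    intro y
    have := hy y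
    rw [hS, mul_zero, add_zero] at this
    rcases mul_eq_zero.mp this with h | h
    · linarith
    · exact h
  have := key.fintype_card_le_finrank
  rwa [Module.finrank_fintype_fun_eq_card, Fintype.card_coe, hv] at this

lemma lam_lt_r {P : Type*} [Fintype P] [DecidableEq P] (blocks : Finset (Finset P))
    (v k lam r : ℕ)
    (hsize : ∀ B ∈ blocks, B.card = k)
    (hpair : ∀ x y : P, x ≠ y → (blocks.filter fun B => x ∈ B ∧ y ∈ B).card = lam)
    (hrepl : ∀ x : P, (blocks.filter fun B => x ∈ B).card = r)
    (hv : Fintype.card P = v) (hlam : 0 < lam) (hk2 : 2 < k) (hkv : k < v - 1) :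
    lam < r := by
  have hv5 : 5 ≤ v := by omega
  have hcard : 1 < Fintype.card P := by omega
  obtain ⟨x, y, hxy⟩ := Fintype.exists_pair_of_one_lt_card hcard
  have hsub : ∀ z : P, (blocks.filter fun B => x ∈ B ∧ z ∈ B) ⊆
      (blocks.filter fun B => x ∈ B) := by
    intro z B hB
    rw [Finset.mem_filter] at hB ⊢
    exact ⟨hB.1, hB.2.1⟩
  have hle : lam ≤ r := by
    rw [← hpair x y hxy, ← hrepl x]
    exact Finset.card_le_card (hsub y)
  rcases lt_or_eq_of_le hle with h | h
  · exact h
  exfalso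
  -- lam = r : every block through x contains every other point
  have hall : ∀ z : P, z ≠ x → (blocks.filter fun B => x ∈ B ∧ z ∈ B) =
      (blocks.filter fun B => x ∈ B) := by
    intro z hz
    apply Finset.eq_of_subset_of_card_le (hsub z)
    rw [hrepl x, hpair x z (Ne.symm hz), h]
  have hne : ((blocks.filter fun B => x ∈ B)).Nonempty := by
    rw [← Finset.card_pos, hrepl x]
    omega
  obtain ⟨B, hB⟩ := hne
  have hBuniv : B = Finset.univ := by
    ext z
    simp only [Finset.mem_univ, iff_true]
    by_cases hz : z = x
    · subst hz
      exact (Finset.mem_filter.mp hB).2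
    · have := hall z hz
      rw [← this] at hB
      exact (Finset.mem_filter.mp hB).2.2
  have : B.card = k := hsize B (Finset.mem_filter.mp hB).1
  rw [hBuniv, Finset.card_univ, hv] at this
  omega


lemma design_pair_identity {P : Type*} [Fintype P] [DecidableEq P]
    (blocks : Finset (Finset P)) (v k lam r : ℕ)
    (hsize : ∀ B ∈ blocks, B.card = k)
    (hpair : ∀ x y : P, x ≠ y → (blocks.filter fun B => x ∈ B ∧ y ∈ B).card = lam)
    (hrepl : ∀ x : P, (blocks.filter fun B => x ∈ B).card = r)
    (hv : Fintype.card P = v) (α : P) :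
    (v - 1) * lam = r * (k - 1) := by
  have h1 : ∑ y ∈ univ.erase α, (blocks.filter fun B => α ∈ B ∧ y ∈ B).card
      = (v - 1) * lam := by
    rw [Finset.sum_congr rfl fun y hy => hpair α y (Ne.symm (Finset.ne_of_mem_erase hy))]
    rw [Finset.sum_const, Finset.card_erase_of_mem (Finset.mem_univ α), Finset.card_univ, hv,
      smul_eq_mul]
  rw [← h1, sum_filter_card_comm]
  rw [Finset.sum_congr rfl (g := fun B => if α ∈ B then k - 1 else 0)
    (fun B hB => ?_)]
  · rw [Finset.sum_ite, Finset.sum_const, Finset.sum_const, smul_eq_mul, smul_eq_mul,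
      mul_zero, add_zero, hrepl α]
  · show _ = if α ∈ B then k - 1 else 0
    by_cases hα : α ∈ B
    · rw [if_pos hα,
        show ((univ.erase α).filter fun y => α ∈ B ∧ y ∈ B) = B.erase α from by
          ext z; simp [hα, and_comm],
        Finset.card_erase_of_mem hα, hsize B hB]
    · rw [if_neg hα]
      simp [hα]

lemma design_flag_identity {P : Type*} [Fintype P] [DecidableEq P]
    (blocks : Finset (Finset P)) (v k r : ℕ)
    (hsize : ∀ B ∈ blocks, B.card = k)
    (hrepl : ∀ x : P, (blocks.filter fun B => x ∈ B).card = r)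
    (hv : Fintype.card P = v) :
    v * r = blocks.card * k := by
  have h1 : ∑ x ∈ (univ : Finset P), (blocks.filter fun B => x ∈ B).card = v * r := by
    rw [Finset.sum_congr rfl fun x _ => hrepl x, Finset.sum_const, Finset.card_univ, hv,
      smul_eq_mul]
  rw [← h1, sum_filter_card_comm]
  rw [Finset.sum_congr rfl (g := fun B => B.card) (fun B _ => by simp [Finset.filter_mem_eq_inter])]
  rw [Finset.sum_congr rfl hsize, Finset.sum_const, smul_eq_mul]

lemma cover_aux {P : Type*} [Fintype P] [DecidableEq P]
    (blocks : Finset (Finset P)) (G : Subgroup (Equiv.Perm P))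
    (htrans : ∀ B₁ ∈ blocks, ∀ B₂ ∈ blocks, ∃ g ∈ G, B₁.image ⇑g = B₂)
    (α : P) (B₀ : Finset P) (hB₀ : B₀ ∈ blocks)
    (O₁ O₂ : Finset P) (hO₂ : O₂.Nonempty) (hunion : O₁ ∪ O₂ = B₀)
    (htr1 : ∀ x ∈ O₁, ∀ y ∈ O₁, ∃ g ∈ G, B₀.image ⇑g = B₀ ∧ g x = y)
    (htr2 : ∀ x ∈ O₂, ∀ y ∈ O₂, ∃ g ∈ G, B₀.image ⇑g = B₀ ∧ g x = y)
    (hα : α ∈ O₁) :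
    ∃ B₁ B₂ : Finset P, ∀ C ∈ blocks, α ∈ C →
      (∃ g : Equiv.Perm P, g ∈ G ∧ g α = α ∧ B₁.image ⇑g = C) ∨
      (∃ g : Equiv.Perm P, g ∈ G ∧ g α = α ∧ B₂.image ⇑g = C) := by
  obtain ⟨p, hp⟩ := hO₂
  have step : ∀ C ∈ blocks, α ∈ C →
      (∃ w : Equiv.Perm P, w ∈ G ∧ C.image ⇑w = B₀ ∧ w α = α) ∨
      (∃ w : Equiv.Perm P, w ∈ G ∧ C.image ⇑w = B₀ ∧ w α = p) := by
    intro C hC hαC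
    obtain ⟨u, huG, huC⟩ := htrans C hC B₀ hB₀
    have huα : u α ∈ B₀ := huC ▸ Finset.mem_image_of_mem _ hαC
    rw [← hunion] at huα
    rcases Finset.mem_union.mp huα with h1 | h2
    · obtain ⟨h, hhG, hhB, hhα⟩ := htr1 (u α) h1 α hα
      refine Or.inl ⟨h * u, mul_mem hhG huG, ?_, ?_⟩
      · rw [Equiv.Perm.coe_mul, ← Finset.image_image, huC, hhB]
      · simpa using hhα
    · obtain ⟨h, hhG, hhB, hhα⟩ := htr2 (u α) h2 p hp
      refine Or.inr ⟨h * u, mul_mem hhG huG, ?_, ?_⟩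
      · rw [Equiv.Perm.coe_mul, ← Finset.image_image, huC, hhB]
      · simpa using hhα
  by_cases hex : ∃ C₂ ∈ blocks, α ∈ C₂ ∧
      ∃ w : Equiv.Perm P, w ∈ G ∧ C₂.image ⇑w = B₀ ∧ w α = p
  · obtain ⟨C₂, hC₂b, hαC₂, w₂, hw₂G, hw₂B, hw₂α⟩ := hex
    refine ⟨B₀, C₂, fun C hC hαC => ?_⟩
    rcases step C hC hαC with ⟨w, hwG, hwB, hwα⟩ | ⟨w, hwG, hwB, hwα⟩
    · exact Or.inl ⟨w⁻¹, inv_mem hwG, inv_fix hwα, image_inv_eq w hwB⟩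
    · refine Or.inr ⟨w⁻¹ * w₂, mul_mem (inv_mem hwG) hw₂G, ?_, ?_⟩
      · rw [Equiv.Perm.coe_mul, Function.comp_apply, hw₂α]
        exact inv_fix hwα
      · rw [Equiv.Perm.coe_mul, ← Finset.image_image, hw₂B, image_inv_eq w hwB]
  · refine ⟨B₀, B₀, fun C hC hαC => ?_⟩
    rcases step C hC hαC with ⟨w, hwG, hwB, hwα⟩ | ⟨w, hwG, hwB, hwα⟩
    · exact Or.inl ⟨w⁻¹, inv_mem hwG, inv_fix hwα, image_inv_eq w hwB⟩
    · exact absurd ⟨C, hC, hαC, w, hwG, hwB, hwα⟩ hex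

-- counting: if blocks through α are covered by two H-orbits, card ≤ 2 * Nat.card H
lemma card_le_two_orbits {P : Type*} [Fintype P] [DecidableEq P]
    (A : Finset (Finset P)) (H : Subgroup (Equiv.Perm P)) (B₁ B₂ : Finset P)
    (hcov : ∀ C ∈ A, (∃ g : ↥H, B₁.image ⇑(g : Equiv.Perm P) = C) ∨
      (∃ g : ↥H, B₂.image ⇑(g : Equiv.Perm P) = C)) :
    A.card ≤ 2 * Nat.card ↥H := by
  classical
  have hcov' : ∀ C : {C // C ∈ A},
      (∃ g : ↥H, B₁.image ⇑(g : Equiv.Perm P) = (C : Finset P)) ∨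
      (∃ g : ↥H, B₂.image ⇑(g : Equiv.Perm P) = (C : Finset P)) :=
    fun C => hcov C.1 C.2
  let f : {C // C ∈ A} → ↥H × Bool := fun C =>
    if h : ∃ g : ↥H, B₁.image ⇑(g : Equiv.Perm P) = (C : Finset P)
    then (h.choose, true)
    else (((hcov' C).resolve_left h).choose, false)
  have hinj : Function.Injective f := by
    intro C D hfCD
    simp only [f] at hfCD
    by_cases hC : ∃ g : ↥H, B₁.image ⇑(g : Equiv.Perm P) = (C : Finset P) <;>
      by_cases hD : ∃ g : ↥H, B₁.image ⇑(g : Equiv.Perm P) = (D : Finset P)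
    · rw [dif_pos hC, dif_pos hD, Prod.mk.injEq] at hfCD
      have h1 := hC.choose_spec
      have h2 := hD.choose_spec
      apply Subtype.ext
      rw [← h1, ← h2, hfCD.1]
    · rw [dif_pos hC, dif_neg hD] at hfCD
      simp at hfCD
    · rw [dif_neg hC, dif_pos hD] at hfCD
      simp at hfCD
    · rw [dif_neg hC, dif_neg hD, Prod.mk.injEq] at hfCD
      have h1 := ((hcov' C).resolve_left hC).choose_spec
      have h2 := ((hcov' D).resolve_left hD).choose_spec
      apply Subtype.ext
      rw [← h1, ← h2, hfCD.1]
  calc A.card = Nat.card {C // C ∈ A} := by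
        rw [Nat.card_eq_fintype_card, Fintype.card_coe]
    _ ≤ Nat.card (↥H × Bool) := Nat.card_le_card_of_injective f hinj
    _ = 2 * Nat.card ↥H := by
        rw [Nat.card_prod]
        rw [Nat.card_eq_fintype_card (α := Bool)]
        simp [mul_comm]


-- orbit-stabilizer style bound
lemma card_le_orbit_stab {P : Type*} [Fintype P] [DecidableEq P]
    (G : Subgroup (Equiv.Perm P)) (α : P) :
    Nat.card ↥G ≤ Fintype.card P *
      Nat.card ↥(G ⊓ MulAction.stabilizer (Equiv.Perm P) α) := by
  classical
  set H := G ⊓ MulAction.stabilizer (Equiv.Perm P) α with hH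
  let sel : P → Equiv.Perm P := fun p =>
    if h : ∃ g : Equiv.Perm P, g ∈ G ∧ g α = p then h.choose else 1
  have hsel : ∀ p : P, (∃ g : Equiv.Perm P, g ∈ G ∧ g α = p) →
      sel p ∈ G ∧ sel p α = p := by
    intro p h
    simp only [sel, dif_pos h]
    exact h.choose_spec
  have hmem : ∀ g : ↥G, (sel ((g : Equiv.Perm P) α))⁻¹ * (g : Equiv.Perm P) ∈ H := by
    intro g
    obtain ⟨h1, h2⟩ := hsel ((g : Equiv.Perm P) α) ⟨g, g.2, rfl⟩
    refine Subgroup.mem_inf.mpr ⟨mul_mem (inv_mem h1) g.2, ?_⟩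
    rw [MulAction.mem_stabilizer_iff]
    show (sel ((g : Equiv.Perm P) α))⁻¹ ((g : Equiv.Perm P) α) = α
    exact inv_fix h2
  let f : ↥G → P × ↥H := fun g =>
    ((g : Equiv.Perm P) α, ⟨(sel ((g : Equiv.Perm P) α))⁻¹ * (g : Equiv.Perm P), hmem g⟩)
  have hinj : Function.Injective f := by
    intro g₁ g₂ hf
    obtain ⟨hf1, hf2⟩ := Prod.ext_iff.mp hf
    apply Subtype.ext
    have := Subtype.ext_iff.mp hf2
    simp only [f] at this hf1
    rw [hf1] at this
    exact mul_left_cancel this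
  calc Nat.card ↥G ≤ Nat.card (P × ↥H) := Nat.card_le_card_of_injective f hinj
    _ = Fintype.card P * Nat.card ↥H := by
        rw [Nat.card_prod, Nat.card_eq_fintype_card (α := P)]


theorem half_flag_transitive_order_bound
    {P : Type*} [Fintype P] [DecidableEq P]
    (blocks : Finset (Finset P)) (v k lam r : ℕ)
    (hD : IsTwoDesign blocks v k lam r)
    (G : Subgroup (Equiv.Perm P))
    (hAut : IsAutGroup G blocks)
    (hHFT : HalfFlagTransitive G blocks) :
    ∀ α : P,
      Nat.card G ≤ 4 * Nat.card ↥(G ⊓ MulAction.stabilizer (Equiv.Perm P) α) ^ 3 := by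
  classical
  intro α
  set H := G ⊓ MulAction.stabilizer (Equiv.Perm P) α with hHdef
  set m := Nat.card ↥H with hmdef
  obtain ⟨hP, hsize, hlam, hpair, hrepl, hk2, hkv⟩ := hD
  have hlamr : lam < r := lam_lt_r blocks v k lam r hsize hpair hrepl hP hlam hk2 hkv
  have hv5 : 5 ≤ v := by omega
  have hm1 : 1 ≤ m := by
    have : Nonempty ↥H := ⟨1⟩
    exact Nat.card_pos
  -- blocks through α
  set A := blocks.filter (fun B => α ∈ B) with hAdef
  have hA : A.card = r := hrepl α
  obtain ⟨B₀, hB₀A⟩ : A.Nonempty := by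
    rw [← Finset.card_pos, hA]; omega
  have hB₀ : B₀ ∈ blocks := (Finset.mem_filter.mp hB₀A).1
  have hαB₀ : α ∈ B₀ := (Finset.mem_filter.mp hB₀A).2
  -- two classes covering blocks through α
  obtain ⟨O₁, O₂, hO₁ne, hO₂ne, _, hunion, _, _, _, htr1, htr2⟩ := hHFT.2 B₀ hB₀
  have hαmem : α ∈ O₁ ∪ O₂ := by rw [hunion]; exact hαB₀
  have hcover : ∃ B₁ B₂ : Finset P, ∀ C ∈ blocks, α ∈ C →
      (∃ g : Equiv.Perm P, g ∈ G ∧ g α = α ∧ B₁.image ⇑g = C) ∨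
      (∃ g : Equiv.Perm P, g ∈ G ∧ g α = α ∧ B₂.image ⇑g = C) := by
    rcases Finset.mem_union.mp hαmem with h | h
    · exact cover_aux blocks G hHFT.1 α B₀ hB₀ O₁ O₂ hO₂ne hunion htr1 htr2 h
    · exact cover_aux blocks G hHFT.1 α B₀ hB₀ O₂ O₁ hO₁ne
        (by rw [Finset.union_comm]; exact hunion) htr2 htr1 h
  obtain ⟨B₁, B₂, hcov⟩ := hcover
  have hr2m : r ≤ 2 * m := by
    rw [← hA]
    apply card_le_two_orbits A H B₁ B₂
    intro C hCA
    have hC : C ∈ blocks := (Finset.mem_filter.mp hCA).1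
    have hαC : α ∈ C := (Finset.mem_filter.mp hCA).2
    rcases hcov C hC hαC with ⟨g, hgG, hgα, himg⟩ | ⟨g, hgG, hgα, himg⟩
    · exact Or.inl ⟨⟨g, Subgroup.mem_inf.mpr ⟨hgG, hgα⟩⟩, himg⟩
    · exact Or.inr ⟨⟨g, Subgroup.mem_inf.mpr ⟨hgG, hgα⟩⟩, himg⟩
  -- design identities
  have hid : (v - 1) * lam = r * (k - 1) :=
    design_pair_identity blocks v k lam r hsize hpair hrepl hP α
  have hvr : v * r = blocks.card * k :=
    design_flag_identity blocks v k r hsize hrepl hP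
  have hfish : v ≤ blocks.card := fisher blocks v k lam r hpair hrepl hP hlamr
  have hbpos : 0 < blocks.card := Finset.card_pos.mpr ⟨B₀, hB₀⟩
  have hkr : k ≤ r := by
    have h1 : blocks.card * k ≤ blocks.card * r := by
      rw [← hvr]
      exact Nat.mul_le_mul_right r hfish
    exact Nat.le_of_mul_le_mul_left h1 hbpos
  -- arithmetic
  have hvm : v ≤ 4 * m ^ 2 := by
    have ha : v - 1 ≤ r * (k - 1) := by
      calc v - 1 ≤ (v - 1) * lam := Nat.le_mul_of_pos_right _ hlam
        _ = r * (k - 1) := hid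
    set a := v - 1 with hadef
    set c := k - 1 with hcdef
    have hva : v = a + 1 := by omega
    have hkc : k = c + 1 := by omega
    have hcr : c + 1 ≤ r := by omega
    have hc2m : c + 1 ≤ 2 * m := le_trans hcr hr2m
    have e1 : r * c ≤ 2 * m * c := Nat.mul_le_mul_right c hr2m
    have e2 : 2 * m * (c + 1) ≤ 2 * m * (2 * m) := Nat.mul_le_mul_left _ hc2m
    have e3 : 4 * m ^ 2 = 2 * m * (2 * m) := by ring
    rw [hva, e3]
    nlinarith [ha, e1, e2, hm1]
  have hG : Nat.card ↥G ≤ v * m := by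
    have := card_le_orbit_stab G α
    rwa [hP] at this
  calc Nat.card ↥G ≤ v * m := hG
    _ ≤ 4 * m ^ 2 * m := Nat.mul_le_mul_right m hvm
    _ = 4 * m ^ 3 := by ring
end

section
/- Let D = (P, B) be a nontrivial 2-(v,k,λ) design with replication number r, and let G ≤ Aut(D) be a half-flag-transitive automorphism group of D that is point-imprimitive, leaving invariant a nontrivial partition of P into s classes each of size w (so v = sw, with s ≥ 2 and w ≥ 2). Then there exist integers k_1, k_2 with 1 ≤ k_1 ≤ k_2 ≤ w-1 such that every nonempty intersection of a block with a partition class has size k_1 or k_2, and moreover r(k_1 + k_2 - 2) = 2λ(w - 1) and 2λ(s - 1) = r(2k - 2 - s(k_1 + k_2 - 2)). -/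
open Finset

section Aux
variable {P : Type*} [Fintype P] [DecidableEq P]

theorem hft_sum_inter_card {blocks : Finset (Finset P)} {v k lam r : ℕ}
    (hD : IsTwoDesign blocks v k lam r) (x : P) (S : Finset P) (hx : x ∈ S) :
    ∑ B ∈ blocks.filter (fun B => x ∈ B), (B ∩ S).card = r + lam * (S.card - 1) := by
  have h1 : ∀ B : Finset P, (B ∩ S).card = ∑ y ∈ S, if y ∈ B then 1 else 0 := by
    intro B
    rw [Finset.inter_comm, ← Finset.filter_mem_eq_inter, Finset.card_filter]
  calc ∑ B ∈ blocks.filter (fun B => x ∈ B), (B ∩ S).card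
      = ∑ B ∈ blocks.filter (fun B => x ∈ B), ∑ y ∈ S, if y ∈ B then 1 else 0 :=
        Finset.sum_congr rfl fun B _ => h1 B
    _ = ∑ y ∈ S, ∑ B ∈ blocks.filter (fun B => x ∈ B), if y ∈ B then 1 else 0 :=
        Finset.sum_comm
    _ = ∑ y ∈ S, ((blocks.filter (fun B => x ∈ B)).filter (fun B => y ∈ B)).card :=
        Finset.sum_congr rfl fun y _ => (Finset.card_filter _ _).symm
    _ = ∑ y ∈ S, (blocks.filter (fun B => x ∈ B ∧ y ∈ B)).card := by
        refine Finset.sum_congr rfl fun y _ => ?_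
        rw [Finset.filter_filter]
    _ = r + lam * (S.card - 1) := by
        rw [← Finset.add_sum_erase S _ hx]
        have h2 : (blocks.filter fun B => x ∈ B ∧ x ∈ B).card = r := by
          simp only [and_self]
          exact hD.repl_count x
        have h3 : ∀ y ∈ S.erase x, (blocks.filter fun B => x ∈ B ∧ y ∈ B).card = lam :=
          fun y hy => hD.pair_count x y (Ne.symm (Finset.ne_of_mem_erase hy))
        rw [h2, Finset.sum_congr rfl h3, Finset.sum_const, smul_eq_mul,
          Finset.card_erase_of_mem hx, mul_comm]

theorem hft_sum_block_swap (blocks : Finset (Finset P)) (f : P → Finset P → ℕ) :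
    ∑ B ∈ blocks, ∑ x ∈ B, f x B
      = ∑ x : P, ∑ B ∈ blocks.filter (fun B => x ∈ B), f x B := by
  have h1 : ∀ B : Finset P, ∑ x ∈ B, f x B = ∑ x : P, if x ∈ B then f x B else 0 := by
    intro B
    rw [Finset.sum_ite_mem, Finset.univ_inter]
  calc ∑ B ∈ blocks, ∑ x ∈ B, f x B
      = ∑ B ∈ blocks, ∑ x : P, if x ∈ B then f x B else 0 :=
        Finset.sum_congr rfl fun B _ => h1 B
    _ = ∑ x : P, ∑ B ∈ blocks, if x ∈ B then f x B else 0 := Finset.sum_comm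
    _ = ∑ x : P, ∑ B ∈ blocks.filter (fun B => x ∈ B), f x B :=
        Finset.sum_congr rfl fun x _ => (Finset.sum_filter _ _).symm

end Aux

theorem half_flag_transitive_imprimitive_parameters
    {P : Type*} [Fintype P] [DecidableEq P]
    (blocks : Finset (Finset P)) (v k lam r : ℕ)
    (hD : IsTwoDesign blocks v k lam r)
    (G : Subgroup (Equiv.Perm P))
    (hAut : IsAutGroup G blocks)
    (hHFT : HalfFlagTransitive G blocks)
    (C : Finset (Finset P)) (s w : ℕ)
    (hC : IsInvariantPartition G C)
    (hs : C.card = s) (hw : ∀ c ∈ C, c.card = w)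
    (hs2 : 2 ≤ s) (hw2 : 2 ≤ w) (hv : v = s * w) :
    ∃ k₁ k₂ : ℕ, 1 ≤ k₁ ∧ k₁ ≤ k₂ ∧ k₂ ≤ w - 1 ∧
      (∀ B ∈ blocks, ∀ c ∈ C, (B ∩ c).Nonempty →
        (B ∩ c).card = k₁ ∨ (B ∩ c).card = k₂) ∧
      (r : ℤ) * ((k₁ : ℤ) + (k₂ : ℤ) - 2) = 2 * (lam : ℤ) * ((w : ℤ) - 1) ∧
      2 * (lam : ℤ) * ((s : ℤ) - 1)
        = (r : ℤ) * (2 * (k : ℤ) - 2 - (s : ℤ) * ((k₁ : ℤ) + (k₂ : ℤ) - 2)) := by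
  obtain ⟨hcls_ne, huniq, hinv⟩ := hC
  choose cl hclC hclmem using fun x : P => (huniq x).exists
  have hclu : ∀ (x : P) (c : Finset P), c ∈ C → x ∈ c → c = cl x := by
    intro x c h1 h2
    exact (huniq x).unique ⟨h1, h2⟩ ⟨hclC x, hclmem x⟩
  have hclw : ∀ x : P, (cl x).card = w := fun x => hw _ (hclC x)
  have hvcard : Fintype.card P = v := hD.card_points
  have hv4 : 4 ≤ v := by
    have := Nat.mul_le_mul hs2 hw2; omega
  have hPcard : 1 < Fintype.card P := by omega
  obtain ⟨p0, q0, hpq⟩ := Fintype.exists_pair_of_one_lt_card hPcard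
  have hblocksne : ∃ B, B ∈ blocks := by
    have hpos : 0 < (blocks.filter fun B => p0 ∈ B ∧ q0 ∈ B).card := by
      rw [hD.pair_count p0 q0 hpq]; exact hD.lam_pos
    obtain ⟨B, hB⟩ := Finset.card_pos.mp hpos
    exact ⟨B, (Finset.mem_filter.mp hB).1⟩
  obtain ⟨B₀, hB₀⟩ := hblocksne
  obtain ⟨htrans, horb⟩ := hHFT
  obtain ⟨O₁, O₂, hO₁ne, hO₂ne, hdisj, hunion, hcards, -, -, htr₁, htr₂⟩ := horb B₀ hB₀
  have himg : ∀ g ∈ G, ∀ x : P, (cl x).image ⇑g = cl (g x) := by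
    intro g hg x
    refine hclu (g x) _ (hinv g hg _ (hclC x)) ?_
    exact Finset.mem_image_of_mem _ (hclmem x)
  have hdinv : ∀ g ∈ G, ∀ (B : Finset P) (x : P),
      ((B.image ⇑g) ∩ cl (g x)).card = (B ∩ cl x).card := by
    intro g hg B x
    rw [← himg g hg x, ← Finset.image_inter _ _ (Equiv.injective g),
      Finset.card_image_of_injective _ (Equiv.injective g)]
  obtain ⟨x₁, hx₁⟩ := hO₁ne
  obtain ⟨x₂, hx₂⟩ := hO₂ne
  set a := (B₀ ∩ cl x₁).card with ha
  set b2 := (B₀ ∩ cl x₂).card with hb2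
  have hconst : ∀ (O : Finset P),
      (∀ x ∈ O, ∀ y ∈ O, ∃ g ∈ G, B₀.image ⇑g = B₀ ∧ g x = y) →
      ∀ x0 ∈ O, ∀ x ∈ O, (B₀ ∩ cl x).card = (B₀ ∩ cl x0).card := by
    intro O htr x0 hx0 x hx
    obtain ⟨g, hg, hgB, hgx⟩ := htr x0 hx0 x hx
    rw [← hgx]
    conv_lhs => rw [← hgB]
    exact hdinv g hg B₀ x0
  have hO₁c : ∀ x ∈ O₁, (B₀ ∩ cl x).card = a := fun x hx => hconst O₁ htr₁ x₁ hx₁ x hx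
  have hO₂c : ∀ x ∈ O₂, (B₀ ∩ cl x).card = b2 := fun x hx => hconst O₂ htr₂ x₂ hx₂ x hx
  have hB₀val : ∀ x ∈ B₀, (B₀ ∩ cl x).card = a ∨ (B₀ ∩ cl x).card = b2 := by
    intro x hx
    rw [← hunion] at hx
    rcases Finset.mem_union.mp hx with h | h
    · exact Or.inl (hO₁c x h)
    · exact Or.inr (hO₂c x h)
  have hAll : ∀ B ∈ blocks, ∀ x ∈ B, (B ∩ cl x).card = a ∨ (B ∩ cl x).card = b2 := by
    intro B hB x hx
    obtain ⟨g, hg, hgB⟩ := htrans B₀ hB₀ B hB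
    rw [← hgB] at hx ⊢
    obtain ⟨x0, hx0, rfl⟩ := Finset.mem_image.mp hx
    rw [hdinv g hg B₀ x0]
    exact hB₀val x0 hx0
  have hsumtrans : ∀ B ∈ blocks,
      ∑ x ∈ B, (B ∩ cl x).card = ∑ x ∈ B₀, (B₀ ∩ cl x).card := by
    intro B hB
    obtain ⟨g, hg, hgB⟩ := htrans B₀ hB₀ B hB
    rw [← hgB, Finset.sum_image (fun x _ y _ h => Equiv.injective g h)]
    exact Finset.sum_congr rfl fun x _ => hdinv g hg B₀ x
  have hO₁card : O₁.card + O₂.card = k := by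
    rw [← Finset.card_union_of_disjoint hdisj, hunion]; exact hD.block_size B₀ hB₀
  have hDsum : 2 * (∑ x ∈ B₀, (B₀ ∩ cl x).card) = k * (a + b2) := by
    have hsplit : ∑ x ∈ B₀, (B₀ ∩ cl x).card
        = ∑ x ∈ O₁, (B₀ ∩ cl x).card + ∑ x ∈ O₂, (B₀ ∩ cl x).card := by
      rw [← Finset.sum_union hdisj, hunion]
    have e1 : ∑ x ∈ O₁, (B₀ ∩ cl x).card = O₁.card * a := by
      rw [Finset.sum_congr rfl hO₁c, Finset.sum_const, smul_eq_mul]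
    have e2 : ∑ x ∈ O₂, (B₀ ∩ cl x).card = O₂.card * b2 := by
      rw [Finset.sum_congr rfl hO₂c, Finset.sum_const, smul_eq_mul]
    rw [hsplit, e1, e2, ← hcards]
    have h2 : 2 * O₁.card = k := by omega
    calc 2 * (O₁.card * a + O₁.card * b2) = (2 * O₁.card) * (a + b2) := by ring
      _ = k * (a + b2) := by rw [h2]
  have hglobal : ∑ B ∈ blocks, ∑ x ∈ B, (B ∩ cl x).card = v * (r + lam * (w - 1)) := by
    rw [hft_sum_block_swap]
    have h1 : ∀ x : P, ∑ B ∈ blocks.filter (fun B => x ∈ B), (B ∩ cl x).card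
        = r + lam * (w - 1) := by
      intro x
      rw [hft_sum_inter_card hD x (cl x) (hclmem x), hclw x]
    rw [Finset.sum_congr rfl (fun x _ => h1 x), Finset.sum_const, smul_eq_mul,
      Finset.card_univ, hvcard]
  have hlhs : ∑ B ∈ blocks, ∑ x ∈ B, (B ∩ cl x).card
      = blocks.card * ∑ x ∈ B₀, (B₀ ∩ cl x).card := by
    rw [Finset.sum_congr rfl hsumtrans, Finset.sum_const, smul_eq_mul]
  have hbk : blocks.card * k = v * r := by
    have h1 := hft_sum_block_swap blocks (fun _ _ => 1)
    have h2 : ∑ B ∈ blocks, ∑ _x ∈ B, (1 : ℕ) = blocks.card * k := by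
      rw [Finset.sum_congr rfl (fun B hB => by
        rw [Finset.sum_const, smul_eq_mul, mul_one, hD.block_size B hB]),
        Finset.sum_const, smul_eq_mul]
    have h3 : ∑ x : P, ∑ _B ∈ blocks.filter (fun B => x ∈ B), (1 : ℕ) = v * r := by
      rw [Finset.sum_congr rfl (fun x _ => by
        rw [Finset.sum_const, smul_eq_mul, mul_one, hD.repl_count x]),
        Finset.sum_const, smul_eq_mul, Finset.card_univ, hvcard]
    rw [← h2, h1, h3]
  have hvpos : 0 < v := by omega
  have hmain : r * (a + b2) = 2 * (r + lam * (w - 1)) := by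
    have h2 : v * (r * (a + b2)) = v * (2 * (r + lam * (w - 1))) := by
      calc v * (r * (a + b2)) = (v * r) * (a + b2) := by ring
        _ = (blocks.card * k) * (a + b2) := by rw [hbk]
        _ = blocks.card * (k * (a + b2)) := by ring
        _ = blocks.card * (2 * ∑ x ∈ B₀, (B₀ ∩ cl x).card) := by rw [hDsum]
        _ = 2 * (blocks.card * ∑ x ∈ B₀, (B₀ ∩ cl x).card) := by ring
        _ = 2 * (v * (r + lam * (w - 1))) := by rw [← hlhs, hglobal]
        _ = v * (2 * (r + lam * (w - 1))) := by ring
    exact Nat.eq_of_mul_eq_mul_left hvpos h2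
  have hrel : r * k = r + lam * (v - 1) := by
    have h := hft_sum_inter_card hD p0 Finset.univ (Finset.mem_univ p0)
    rw [Finset.card_univ, hvcard] at h
    rw [← h]
    rw [Finset.sum_congr rfl (fun B hB => by
      rw [Finset.inter_univ, hD.block_size B (Finset.mem_filter.mp hB).1]),
      Finset.sum_const, smul_eq_mul, hD.repl_count p0, mul_comm]
  have hrpos : 0 < r := by
    rcases Nat.eq_zero_or_pos r with h0 | h
    · rw [h0, Nat.zero_mul] at hrel
      have h2 : lam * (v - 1) = 0 := by omega
      rcases Nat.mul_eq_zero.mp h2 with h | h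
      · have := hD.lam_pos; omega
      · omega
    · exact h
  have hx₁B : x₁ ∈ B₀ := by rw [← hunion]; exact Finset.mem_union_left _ hx₁
  have hx₂B : x₂ ∈ B₀ := by rw [← hunion]; exact Finset.mem_union_right _ hx₂
  have ha1 : 1 ≤ a := Finset.card_pos.mpr ⟨x₁, Finset.mem_inter.mpr ⟨hx₁B, hclmem x₁⟩⟩
  have hb1 : 1 ≤ b2 := Finset.card_pos.mpr ⟨x₂, Finset.mem_inter.mpr ⟨hx₂B, hclmem x₂⟩⟩
  have haw : a ≤ w := le_trans (Finset.card_le_card Finset.inter_subset_right)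
    (le_of_eq (hclw x₁))
  have hbw : b2 ≤ w := le_trans (Finset.card_le_card Finset.inter_subset_right)
    (le_of_eq (hclw x₂))
  set m1 := min a b2 with hm1
  set m2 := max a b2 with hm2
  have hm12 : m1 + m2 = a + b2 := min_add_max a b2
  -- integer equations
  have hmainm : r * (m1 + m2) = 2 * (r + lam * (w - 1)) := by
    rw [hm12]; exact hmain
  have e1 : (r : ℤ) * ((m1 : ℤ) + (m2 : ℤ) - 2) = 2 * (lam : ℤ) * ((w : ℤ) - 1) := by
    zify [show 1 ≤ w by omega] at hmainm
    linear_combination hmainm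
  have hrelZ : (r : ℤ) * ((k : ℤ) - 1) = (lam : ℤ) * ((s : ℤ) * (w : ℤ) - 1) := by
    have hvz : (v : ℤ) = (s : ℤ) * (w : ℤ) := by exact_mod_cast hv
    zify [show 1 ≤ v by omega] at hrel
    linear_combination hrel + (lam : ℤ) * hvz
  have e2 : 2 * (lam : ℤ) * ((s : ℤ) - 1)
      = (r : ℤ) * (2 * (k : ℤ) - 2 - (s : ℤ) * ((m1 : ℤ) + (m2 : ℤ) - 2)) := by
    linear_combination (s : ℤ) * e1 - 2 * hrelZ
  -- k₂ ≤ w - 1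
  have hmaxw : m2 ≤ w := by omega
  have hk2le : m2 ≤ w - 1 := by
    rcases lt_or_eq_of_le hmaxw with hlt | heqw
    · omega
    · exfalso
      by_cases hmm : m1 = w
      · -- all block-class intersections have size w
        have hallw : ∀ B ∈ blocks, ∀ x ∈ B, cl x ⊆ B := by
          intro B hB x hx
          have h1 : (B ∩ cl x).card = w := by rcases hAll B hB x hx with h' | h' <;> omega
          exact Finset.inter_eq_right.mp (Finset.eq_of_subset_of_card_le
            Finset.inter_subset_right (by rw [h1, hclw]))
        obtain ⟨y, hy, hyne⟩ := Finset.exists_mem_ne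
          (by rw [hclw p0]; omega) p0
        have hfeq : blocks.filter (fun B => p0 ∈ B ∧ y ∈ B)
            = blocks.filter (fun B => p0 ∈ B) := by
          refine Finset.filter_congr fun B hB => ?_
          exact ⟨fun h => h.1, fun h => ⟨h, hallw B hB p0 h hy⟩⟩
        have hlr : lam = r := by
          rw [← hD.pair_count p0 y (Ne.symm hyne), hfeq, hD.repl_count p0]
        have hrv : r * v = r + r * (v - 1) := by
          nth_rewrite 1 [show v = 1 + (v - 1) by omega]
          ring
        have hkv : k = v := by
          refine Nat.eq_of_mul_eq_mul_left hrpos ?_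
          rw [hrel, hlr, ← hrv]
        have := hD.k_lt
        omega
      · -- m1 < w = m2
        have hm1w : m1 < w := by omega
        have key : ∀ O O' : Finset P, O ∪ O' = B₀ → Disjoint O O' → O.card = O'.card →
            (∀ x ∈ O, (B₀ ∩ cl x).card = w) → (∀ x ∈ O', (B₀ ∩ cl x).card = m1) →
            False := by
          intro O O' hun hdis hcard hvw hvk
          have hWO : B₀.filter (fun x => cl x ⊆ B₀) = O := by
            ext x
            simp only [Finset.mem_filter]
            constructor
            · rintro ⟨hxB, hsub⟩
              have h1 : (B₀ ∩ cl x).card = w := by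
                rw [Finset.inter_eq_right.mpr hsub, hclw]
              rw [← hun] at hxB
              rcases Finset.mem_union.mp hxB with h | h
              · exact h
              · exact absurd (hvk x h) (by omega)
            · intro hxO
              have hxB : x ∈ B₀ := by rw [← hun]; exact Finset.mem_union_left _ hxO
              refine ⟨hxB, ?_⟩
              exact Finset.inter_eq_right.mp (Finset.eq_of_subset_of_card_le
                Finset.inter_subset_right (by rw [hvw x hxO, hclw]))
          have hWT : B₀.filter (fun x => cl x ⊆ B₀)
              = (C.filter (fun c => c ⊆ B₀)).biUnion id := by
            ext x
            simp only [Finset.mem_filter, Finset.mem_biUnion, id]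
            constructor
            · rintro ⟨hxB, hsub⟩
              exact ⟨cl x, ⟨hclC x, hsub⟩, hclmem x⟩
            · rintro ⟨c, ⟨hcC, hcsub⟩, hxc⟩
              have hcx : c = cl x := hclu x c hcC hxc
              exact ⟨hcsub hxc, hcx ▸ hcsub⟩
          have hdisjC : ∀ c₁ ∈ C.filter (fun c => c ⊆ B₀), ∀ c₂ ∈ C.filter (fun c => c ⊆ B₀),
              c₁ ≠ c₂ → Disjoint (id c₁) (id c₂) := by
            intro c₁ h₁ c₂ h₂ hne12
            rw [Finset.disjoint_left]
            intro z hz1 hz2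
            exact hne12 ((hclu z c₁ (Finset.mem_filter.mp h₁).1 hz1).trans
              (hclu z c₂ (Finset.mem_filter.mp h₂).1 hz2).symm)
          set t := (C.filter (fun c => c ⊆ B₀)).card with ht
          have hcardW : O.card = t * w := by
            rw [← hWO, hWT, Finset.card_biUnion hdisjC]
            simp only [id_eq]
            rw [Finset.sum_congr rfl (fun c hc => hw c (Finset.mem_filter.mp hc).1),
              Finset.sum_const, smul_eq_mul]
          have hkt : k = 2 * (t * w) := by
            have h1 : O.card + O'.card = k := by
              rw [← Finset.card_union_of_disjoint hdis, hun]
              exact hD.block_size B₀ hB₀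
            omega
          have e1w : (r : ℤ) * ((m1 : ℤ) + (w : ℤ) - 2) = 2 * (lam : ℤ) * ((w : ℤ) - 1) := by
            have h := e1
            rw [heqw] at h
            exact h
          have hlamr : ((lam : ℤ) * r) ≠ 0 := by
            have h1 : (0 : ℤ) < (lam : ℤ) * r := by
              exact_mod_cast Nat.mul_pos hD.lam_pos hrpos
            exact h1.ne'
          have E : ((lam : ℤ) * r) * (2 * ((w : ℤ) - 1) * ((k : ℤ) - 1))
              = ((lam : ℤ) * r) * (((m1 : ℤ) + (w : ℤ) - 2) * ((s : ℤ) * (w : ℤ) - 1)) := by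
            linear_combination ((r : ℤ) * ((m1 : ℤ) + (w : ℤ) - 2)) * hrelZ
              - ((r : ℤ) * ((k : ℤ) - 1)) * e1w
          have E' : 2 * ((w : ℤ) - 1) * ((k : ℤ) - 1)
              = ((m1 : ℤ) + (w : ℤ) - 2) * ((s : ℤ) * (w : ℤ) - 1) :=
            mul_left_cancel₀ hlamr E
          have hkZ : (k : ℤ) = 2 * ((t : ℤ) * (w : ℤ)) := by exact_mod_cast hkt
          rw [hkZ] at E'
          haveI : NeZero w := ⟨by omega⟩
          have EC := congrArg (fun z : ℤ => (z : ZMod w)) E'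
          push_cast at EC
          rw [ZMod.natCast_self] at EC
          have hz : ((m1 : ℕ) : ZMod w) = 0 := by linear_combination EC
          have hdvd : w ∣ m1 := (ZMod.natCast_eq_zero_iff _ _).mp hz
          have := Nat.le_of_dvd (by omega) hdvd
          omega
        rcases le_total a b2 with hab | hab
        · exact key O₂ O₁ (by rw [Finset.union_comm, hunion]) hdisj.symm hcards.symm
            (fun x hx => by rw [hO₂c x hx]; omega)
            (fun x hx => by rw [hO₁c x hx]; omega)
        · exact key O₁ O₂ hunion hdisj hcards
            (fun x hx => by rw [hO₁c x hx]; omega)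
            (fun x hx => by rw [hO₂c x hx]; omega)
  refine ⟨m1, m2, by omega, by omega, hk2le, ?_, e1, e2⟩
  intro B hB c hc hne
  obtain ⟨x, hx⟩ := hne
  have hxB : x ∈ B := (Finset.mem_inter.mp hx).1
  have hxc := (Finset.mem_inter.mp hx).2
  rw [hclu x c hc hxc]
  rcases hAll B hB x hxB with h | h <;> omega
end
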